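/- arXiv:1909.09875 — 8 statements merged into one kernel-verified Lean document; each statement's English description precedes it below -/
import Mathlib

section
/- Consider the polyhedron Λ = {(α, β) ∈ ℝ^J × ℝ^I : β_i + α_j ≤ 0 for all i ∈ [I] and j ∈ P_i, and c_e ≤ α_j ≤ c_x for all j ∈ [J]}, where c_e ≤ c_x are real constants and each P_i ⊆ [J] is nonempty. Then every extreme point (ᾱ, β̄) of Λ satisfies ᾱ_j ∈ {c_e, c_x} for all j ∈ [J] and β̄_i = −max{ᾱ_j : j ∈ P_i} for all i ∈ [I]. -/
/-!
An extreme point cannot have slack in `β_i + max_{P_i} α ≤ 0`: raising and lowering `β_i` alone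
would write it as a midpoint. So `β = -max α` at an extreme point. If then some value `t` of `α`
lay strictly inside `[c_e, c_x]`, moving every coordinate of `α` equal to `t`, and every `β_i`
with `max_{P_i} α = t`, by `±s` keeps the point feasible for small `s`: for `s` below the gap
between `t` and the other values of `α`, `y ↦ y + s·[y = t]` is monotone on those values and so
preserves every inequality `α_j ≤ max_{P_i} α`.
-/

open Function

theorem notMem_extremePoints_of_midpoint_eq {𝕜 E : Type*} [Field 𝕜] [LinearOrder 𝕜]
    [IsStrictOrderedRing 𝕜] [AddCommGroup E] [Module 𝕜 E] {A : Set E} {x y z : E}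
    (hy : y ∈ A) (hz : z ∈ A) (hyz : y ≠ z) (hmid : midpoint 𝕜 y z = x) :
    x ∉ A.extremePoints 𝕜 := fun hx ↦
  have h := (mem_extremePoints.1 hx).2 y hy z hz (hmid ▸ midpoint_mem_openSegment y z)
  hyz (h.1.trans h.2.symm)

section update_id

variable {𝕜 : Type*} [Field 𝕜] [LinearOrder 𝕜] [IsStrictOrderedRing 𝕜]

theorem monotoneOn_update_id {V : Set 𝕜} {t s : 𝕜}
    (hs : ∀ v ∈ V, v ≠ t → |s| ≤ |v - t|) : MonotoneOn (update id t (t + s)) V := by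
  intro a ha b hb hab
  rcases eq_or_ne a t with rfl | hat <;> rcases eq_or_ne b a with rfl | hba
  · exact le_rfl
  · have := hs b hb hba
    simp only [update_self, update_of_ne hba, id]
    rw [abs_of_pos (sub_pos.2 (lt_of_le_of_ne hab hba.symm))] at this
    linarith [le_abs_self s]
  · exact le_rfl
  · rcases eq_or_ne b t with rfl | hbt
    · have := hs a ha hat
      simp only [update_self, update_of_ne hat, id]
      rw [abs_sub_comm, abs_of_pos (sub_pos.2 (lt_of_le_of_ne hab hat))] at this
      linarith [neg_abs_le s]
    · simpa [update_of_ne hat, update_of_ne hbt] using hab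

omit [IsStrictOrderedRing 𝕜] in
theorem update_id_add_update_id_sub (t s v : 𝕜) :
    update id t (t + s) v + update id t (t - s) v = v + v := by
  rcases eq_or_ne v t with rfl | hvt
  · simp only [update_self]; ring
  · simp [update_of_ne hvt]

end update_id

def dualRegion {ι κ : Type*} (P : ι → Finset κ) (ce cx : ℝ) : Set ((κ → ℝ) × (ι → ℝ)) :=
  {p | (∀ i, ∀ j ∈ P i, p.2 i + p.1 j ≤ 0) ∧ (∀ j, ce ≤ p.1 j ∧ p.1 j ≤ cx)}

theorem mem_dualRegion {ι κ : Type*} {P : ι → Finset κ} {ce cx : ℝ}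
    {p : (κ → ℝ) × (ι → ℝ)} : p ∈ dualRegion P ce cx ↔
      (∀ i, ∀ j ∈ P i, p.2 i + p.1 j ≤ 0) ∧ (∀ j, ce ≤ p.1 j ∧ p.1 j ≤ cx) :=
  Iff.rfl

namespace dualRegion

variable {ι κ : Type*} {P : ι → Finset κ} {ce cx : ℝ}

theorem snd_le_neg_sup' {x : (κ → ℝ) × (ι → ℝ)} (hx : x ∈ dualRegion P ce cx) (i : ι)
    (hPi : (P i).Nonempty) : x.2 i ≤ -(P i).sup' hPi x.1 :=
  le_neg_of_le_neg <| Finset.sup'_le _ _ fun j hj =>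
    le_neg_of_le_neg <| by linarith [hx.1 i j hj]

theorem snd_eq_neg_sup'_of_mem_extremePoints {x : (κ → ℝ) × (ι → ℝ)}
    (hx : x ∈ (dualRegion P ce cx).extremePoints ℝ) (i : ι) (hPi : (P i).Nonempty) :
    x.2 i = -(P i).sup' hPi x.1 := by
  classical
  refine (snd_le_neg_sup' hx.1 i hPi).antisymm (not_lt.1 fun hlt => ?_)
  obtain ⟨hcons, hbox⟩ := hx.1
  have hslack : 0 < -(P i).sup' hPi x.1 - x.2 i := sub_pos.2 hlt
  let d : (κ → ℝ) × (ι → ℝ) := (0, Pi.single i (-(P i).sup' hPi x.1 - x.2 i))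
  refine notMem_extremePoints_of_midpoint_eq (y := x + d) (z := x - d)
    (mem_dualRegion.2 ⟨?_, ?_⟩) (mem_dualRegion.2 ⟨?_, ?_⟩) ?_ (midpoint_add_sub ..) hx
  · intro i' j hj
    rcases eq_or_ne i' i with rfl | hi
    · simp only [Prod.snd_add, Pi.add_apply, Pi.single_eq_same, Prod.fst_add, Pi.zero_apply,
        add_zero, d]
      linarith [Finset.le_sup' x.1 hj]
    · simpa [d, hi] using hcons i' j hj
  · simpa [d] using hbox
  · intro i' j hj
    rcases eq_or_ne i' i with rfl | hi
    · simp only [Prod.snd_sub, Pi.sub_apply, Pi.single_eq_same, Prod.fst_sub, Pi.zero_apply,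
        sub_zero, d]
      linarith [hcons i' j hj]
    · simpa [d, hi] using hcons i' j hj
  · simpa [d] using hbox
  · intro h
    have := congrArg (fun p => p.2 i) h
    simp only [Prod.snd_add, Pi.add_apply, Pi.single_eq_same, Prod.snd_sub, Pi.sub_apply, d]
      at this
    linarith

theorem comp_mem_of_monotoneOn (hP : ∀ i, (P i).Nonempty) {α : κ → ℝ} {g : ℝ → ℝ}
    (hg : MonotoneOn g (Set.range α)) (hbox : ∀ j, g (α j) ∈ Set.Icc ce cx) :
    (g ∘ α, fun i => -g ((P i).sup' (hP i) α)) ∈ dualRegion P ce cx := by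
  refine mem_dualRegion.2 ⟨fun i j hj => ?_, hbox⟩
  obtain ⟨k, -, hk⟩ := Finset.exists_mem_eq_sup' (hP i) α
  have : g (α j) ≤ g (α k) := hg ⟨j, rfl⟩ ⟨k, rfl⟩ (hk ▸ Finset.le_sup' α hj)
  simp only [hk, comp_apply]
  linarith

theorem update_id_comp_mem_of_abs_lt (hP : ∀ i, (P i).Nonempty) {α : κ → ℝ}
    (hα : ∀ j, α j ∈ Set.Icc ce cx) {t ε s : ℝ}
    (hball : Metric.ball t ε ⊆ Set.Ioo ce cx ∩ (Set.range α \ {t})ᶜ) (hs : |s| < ε) :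
    (update id t (t + s) ∘ α, fun i => -update id t (t + s) ((P i).sup' (hP i) α)) ∈
      dualRegion P ce cx := by
  refine comp_mem_of_monotoneOn hP (monotoneOn_update_id ?_) fun k => ?_
  · rintro _ ⟨k, rfl⟩ hk
    have : α k ∉ Metric.ball t ε := fun h => (hball h).2 ⟨⟨k, rfl⟩, hk⟩
    rw [Metric.mem_ball, Real.dist_eq, not_lt] at this
    exact hs.le.trans this
  · rcases eq_or_ne (α k) t with hk | hk
    · rw [hk, update_self]
      refine Set.Ioo_subset_Icc_self (hball ?_).1
      simpa [Real.dist_eq] using hs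
    · rw [update_of_ne hk]
      exact hα k

open Topology in
theorem fst_eq_or_eq_of_mem_extremePoints [Finite κ] (hP : ∀ i, (P i).Nonempty)
    {x : (κ → ℝ) × (ι → ℝ)} (hx : x ∈ (dualRegion P ce cx).extremePoints ℝ) (j : κ) :
    x.1 j = ce ∨ x.1 j = cx := by
  obtain ⟨α, β⟩ := x
  obtain rfl : β = fun i => -(P i).sup' (hP i) α :=
    funext fun i => snd_eq_neg_sup'_of_mem_extremePoints hx i (hP i)
  have hα := (mem_dualRegion.1 hx.1).2
  by_contra! h
  set t := α j
  have hU : Set.Ioo ce cx ∩ (Set.range α \ {t})ᶜ ∈ 𝓝 t :=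
    Filter.inter_mem (Ioo_mem_nhds ((hα j).1.lt_of_ne h.1.symm) ((hα j).2.lt_of_ne h.2))
      ((Set.finite_range α).sdiff.isClosed.isOpen_compl.mem_nhds (by simp))
  obtain ⟨ε, hε, hball⟩ := Metric.mem_nhds_iff.1 hU
  refine notMem_extremePoints_of_midpoint_eq
    (update_id_comp_mem_of_abs_lt hP hα hball (s := ε / 2) ?_)
    (update_id_comp_mem_of_abs_lt hP hα hball (s := -(ε / 2)) ?_) ?_ ?_ hx
  · rw [abs_of_pos (half_pos hε)]; exact half_lt_self hε
  · rw [abs_neg, abs_of_pos (half_pos hε)]; exact half_lt_self hε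
  · intro h
    have := congrFun (congrArg Prod.fst h) j
    simp only [comp_apply, update_self, add_right_inj, t] at this
    linarith
  · rw [midpoint_eq_smul_add]
    ext k
    · simp only [Prod.smul_fst, Prod.fst_add, Pi.add_apply, Pi.smul_apply, comp_apply,
        smul_eq_mul, invOf_eq_inv, ← sub_eq_add_neg]
      linarith [update_id_add_update_id_sub t (ε / 2) (α k)]
    · simp only [Prod.smul_snd, Prod.snd_add, Pi.add_apply, Pi.smul_apply, smul_eq_mul,
        invOf_eq_inv, ← sub_eq_add_neg]
      linarith [update_id_add_update_id_sub t (ε / 2) ((P k).sup' (hP k) α)]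

end dualRegion

theorem extreme_points_of_dual_region_general
    (I J : ℕ) (ce cx : ℝ)
    (P : Fin I → Finset (Fin J)) (hP : ∀ i, (P i).Nonempty) :
    ∀ x ∈ Set.extremePoints ℝ
        {p : (Fin J → ℝ) × (Fin I → ℝ) |
          (∀ i : Fin I, ∀ j ∈ P i, p.2 i + p.1 j ≤ 0) ∧
          (∀ j : Fin J, ce ≤ p.1 j ∧ p.1 j ≤ cx)},
      (∀ j : Fin J, x.1 j = ce ∨ x.1 j = cx) ∧
      (∀ i : Fin I, x.2 i = -((P i).sup' (hP i) (fun j => x.1 j))) :=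
  fun _ hx => ⟨dualRegion.fst_eq_or_eq_of_mem_extremePoints hP hx,
    fun i => dualRegion.snd_eq_neg_sup'_of_mem_extremePoints hx i (hP i)⟩

/-- every extreme point `(ᾱ, β̄)` of the polyhedron
`Λ = {(α, β) : β_i + α_j ≤ 0 ∀ i, j ∈ P_i;  c_e ≤ α_j ≤ c_x ∀ j}`
satisfies `ᾱ_j ∈ {c_e, c_x}` for all `j` and `β̄_i = -max{ᾱ_j : j ∈ P_i}` for all `i`. -/
theorem extreme_points_of_dual_region
    (I J : ℕ) (ce cx : ℝ) (hc : ce ≤ cx)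
    (P : Fin I → Finset (Fin J)) (hP : ∀ i, (P i).Nonempty) :
    ∀ x ∈ Set.extremePoints ℝ
        {p : (Fin J → ℝ) × (Fin I → ℝ) |
          (∀ i : Fin I, ∀ j ∈ P i, p.2 i + p.1 j ≤ 0) ∧
          (∀ j : Fin J, ce ≤ p.1 j ∧ p.1 j ≤ cx)},
      (∀ j : Fin J, x.1 j = ce ∨ x.1 j = cx) ∧
      (∀ i : Fin I, x.2 i = -((P i).sup' (hP i) (fun j => x.1 j))) :=
  extreme_points_of_dual_region_general I J ce cx P hP
end

section
/- Fix reals c_t_j, c_r_j for j ∈ [J] and c_p ∈ ℝ. Consider the linear program: maximize Σ_{j=1}^J (c_t_j t_j + c_r_j r_j) + c_p·p over (t, s, r, p) ≥ 0 subject to Σ_{j=1}^J s_j ≤ 1; s_j ≤ t_j and t_j ≤ Σ_{ℓ=j}^J s_ℓ for all j ∈ [J]; t_j + r_j = 1 for all j ∈ [J]; and Σ_{j=1}^J s_j + p = 1. Its optimal value equals max{ c_p + Σ_{ℓ=1}^J c_r_ℓ, max_{j ∈ [J]} { c_t_j + Σ_{ℓ=1}^{j−1} max{c_t_ℓ, c_r_ℓ}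 + Σ_{ℓ=j+1}^J c_r_ℓ } }. -/
/-!
With `d = c_t - c_r` and `r = 1 - t`, the objective is `∑ c_r + c_p p + ∑ d_j t_j`. Splitting
`d_j = max d_j 0 + min d_j 0` and using `s_j ≤ t_j ≤ ∑_{ℓ ≥ j} s_ℓ`, then exchanging the order of
summation, gives `∑ d_j t_j ≤ ∑ g_ℓ s_ℓ` with `g_ℓ = d_ℓ + ∑_{j < ℓ} max d_j 0`. As `p` and the `s_ℓ`
are nonnegative weights summing to `1`, the objective is at most `∑ c_r + max c_p (max_ℓ g_ℓ)`.
This is attained by `p = 1`, or by `s = e_{j₀}` with `t` the indicator of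
`{j₀} ∪ {ℓ < j₀ | 0 ≤ d_ℓ}`.
-/

open Finset

section Split

variable {ι M : Type*} [Fintype ι] [LinearOrder ι] [AddCommMonoid M]

theorem sum_filter_le_eq_sum_filter_lt_add (f : ι → M) (j : ι) :
    ∑ ℓ ∈ univ.filter (· ≤ j), f ℓ = ∑ ℓ ∈ univ.filter (· < j), f ℓ + f j := by
  have : univ.filter (· ≤ j) = insert j (univ.filter (· < j)) := by
    ext; simp [le_iff_lt_or_eq, or_comm]
  rw [this, sum_insert (by simp), add_comm]

theorem sum_eq_sum_filter_lt_add_add_sum_filter_gt (f : ι → M) (j : ι) :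
    ∑ ℓ, f ℓ = ∑ ℓ ∈ univ.filter (· < j), f ℓ + f j + ∑ ℓ ∈ univ.filter (j < ·), f ℓ := by
  rw [← sum_filter_le_eq_sum_filter_lt_add, ← sum_filter_add_sum_filter_not univ (· ≤ j)]
  simp only [not_le]

end Split

theorem sum_mul_sum_filter_ge_eq_sum_sum_filter_le_mul {ι R : Type*} [Fintype ι] [LinearOrder ι]
    [NonUnitalNonAssocSemiring R] (a s : ι → R) :
    ∑ j, a j * ∑ ℓ ∈ univ.filter (j ≤ ·), s ℓ = ∑ ℓ, (∑ j ∈ univ.filter (· ≤ ℓ), a j) * s ℓ := by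
  simp_rw [mul_sum, sum_mul]
  exact sum_comm' fun _ _ => by simp

theorem mul_le_max_zero_mul_add_min_zero_mul {R : Type*} [Ring R] [LinearOrder R]
    [IsOrderedRing R] {d s t u : R} (hst : s ≤ t) (htu : t ≤ u) :
    d * t ≤ max d 0 * u + min d 0 * s := by
  calc d * t = max d 0 * t + min d 0 * t := by rw [← add_mul, max_add_min, add_zero]
    _ ≤ max d 0 * u + min d 0 * s := add_le_add
        (mul_le_mul_of_nonneg_left htu (le_max_right d 0))
        (mul_le_mul_of_nonpos_left hst (min_le_right d 0))

theorem mul_add_sum_mul_le {ι R : Type*} [Fintype ι] [CommSemiring R] [PartialOrder R]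
    [IsOrderedRing R] {c p M : R} {g s : ι → R}
    (hp : 0 ≤ p) (hs : ∀ j, 0 ≤ s j) (hps : ∑ j, s j + p = 1)
    (hc : c ≤ M) (hg : ∀ j, g j ≤ M) : c * p + ∑ j, g j * s j ≤ M := calc
  c * p + ∑ j, g j * s j ≤ M * p + ∑ j, M * s j := by
    gcongr with j
    · exact hs j
    · exact hg j
  _ = M := by rw [← mul_sum, ← mul_add, add_comm, hps, mul_one]

theorem sum_mul_add_mul_one_sub {ι R : Type*} [Fintype ι] [CommRing R] (a b t : ι → R) :
    ∑ j, (a j * t j + b j * (1 - t j)) = ∑ j, b j + ∑ j, (a j - b j) * t j := by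
  rw [← sum_add_distrib]
  exact sum_congr rfl fun _ _ => by ring

theorem max_sup'_mem {α ι : Type*} [LinearOrder α] {S : Set α} {s : Finset ι} (hs : s.Nonempty)
    {a : α} {f : ι → α} (ha : a ∈ S) (hf : ∀ j ∈ s, f j ∈ S) : max a (s.sup' hs f) ∈ S := by
  rcases max_choice a (s.sup' hs f) with h | h <;> rw [h]
  · exact ha
  · obtain ⟨j, hj, hfj⟩ := exists_mem_eq_sup' hs f
    exact hfj ▸ hf j hj

section OnePool

variable {ι : Type*} [Fintype ι] [LinearOrder ι]

def prefixGain (d : ι → ℝ) (j : ι) : ℝ :=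
  d j + ∑ ℓ ∈ univ.filter (· < j), max (d ℓ) 0

theorem sum_mul_le_sum_prefixGain_mul (d s t : ι → ℝ) (hst : ∀ j, s j ≤ t j)
    (hts : ∀ j, t j ≤ ∑ ℓ ∈ univ.filter (j ≤ ·), s ℓ) :
    ∑ j, d j * t j ≤ ∑ ℓ, prefixGain d ℓ * s ℓ := calc
  ∑ j, d j * t j
      ≤ ∑ j, (max (d j) 0 * ∑ ℓ ∈ univ.filter (j ≤ ·), s ℓ + min (d j) 0 * s j) :=
    sum_le_sum fun j _ => mul_le_max_zero_mul_add_min_zero_mul (hst j) (hts j)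
  _ = ∑ ℓ, prefixGain d ℓ * s ℓ := by
    rw [sum_add_distrib, sum_mul_sum_filter_ge_eq_sum_sum_filter_le_mul, ← sum_add_distrib]
    refine sum_congr rfl fun ℓ _ => ?_
    rw [sum_filter_le_eq_sum_filter_lt_add, prefixGain]
    linear_combination s ℓ * max_add_min (d ℓ) 0

theorem candidate_eq_sum_add_prefixGain (ct cr : ι → ℝ) (j : ι) :
    ct j + (∑ ℓ ∈ univ.filter (· < j), max (ct ℓ) (cr ℓ)) + ∑ ℓ ∈ univ.filter (j < ·), cr ℓ =
      ∑ ℓ, cr ℓ + prefixGain (fun ℓ => ct ℓ - cr ℓ) j := by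
  have hmax : ∀ ℓ, max (ct ℓ) (cr ℓ) = cr ℓ + max (ct ℓ - cr ℓ) 0 := fun ℓ => by
    rw [← sub_self (cr ℓ), max_sub_sub_right]; ring
  simp only [hmax, sum_add_distrib, prefixGain, sum_eq_sum_filter_lt_add_add_sum_filter_gt cr j]
  ring

def onePoolValues (ct cr : ι → ℝ) (cp : ℝ) : Set ℝ :=
  {v : ℝ | ∃ (t s r : ι → ℝ) (p : ℝ),
    (∀ j, 0 ≤ t j) ∧ (∀ j, 0 ≤ s j) ∧ (∀ j, 0 ≤ r j) ∧ 0 ≤ p ∧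
    (∑ j, s j) ≤ 1 ∧
    (∀ j, s j ≤ t j) ∧
    (∀ j : ι, t j ≤ ∑ ℓ ∈ Finset.univ.filter (fun ℓ => j ≤ ℓ), s ℓ) ∧
    (∀ j, t j + r j = 1) ∧
    (∑ j, s j) + p = 1 ∧
    v = (∑ j, (ct j * t j + cr j * r j)) + cp * p}

variable (ct cr : ι → ℝ) (cp : ℝ)

theorem cp_add_sum_mem_onePoolValues : cp + ∑ ℓ, cr ℓ ∈ onePoolValues ct cr cp :=
  ⟨0, 0, 1, 1, fun _ => le_rfl, fun _ => le_rfl, fun _ => zero_le_one, zero_le_one,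
    by simp, fun _ => le_rfl, fun _ => by simp, fun _ => by simp, by simp, by simp [add_comm]⟩

theorem candidate_mem_onePoolValues (j₀ : ι) :
    ct j₀ + (∑ ℓ ∈ univ.filter (· < j₀), max (ct ℓ) (cr ℓ)) + ∑ ℓ ∈ univ.filter (j₀ < ·), cr ℓ ∈
      onePoolValues ct cr cp := by
  set d : ι → ℝ := fun ℓ => ct ℓ - cr ℓ
  set t : ι → ℝ := fun ℓ => if ℓ = j₀ ∨ ℓ < j₀ ∧ 0 ≤ d ℓ then 1 else 0
  have ht_nonneg : ∀ ℓ, 0 ≤ t ℓ := fun ℓ => by dsimp only [t]; split_ifs <;> norm_num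
  have ht_le_one : ∀ ℓ, t ℓ ≤ 1 := fun ℓ => by dsimp only [t]; split_ifs <;> norm_num
  have ht_of_gt : ∀ ℓ, j₀ < ℓ → t ℓ = 0 := fun ℓ hℓ => by
    simp [t, hℓ.ne', not_lt_of_gt hℓ]
  have hval : ∑ ℓ, d ℓ * t ℓ = prefixGain d j₀ := by
    have hlt : ∑ ℓ ∈ univ.filter (· < j₀), d ℓ * t ℓ =
        ∑ ℓ ∈ univ.filter (· < j₀), max (d ℓ) 0 := by
      refine sum_congr rfl fun ℓ hℓ => ?_
      have hℓ : ℓ < j₀ := (mem_filter.1 hℓ).2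
      simp only [t, hℓ.ne, hℓ, true_and, false_or]
      split_ifs with hd
      · rw [mul_one, max_eq_left hd]
      · rw [mul_zero, max_eq_right (not_le.1 hd).le]
    have hgt : ∑ ℓ ∈ univ.filter (j₀ < ·), d ℓ * t ℓ = 0 :=
      sum_eq_zero fun ℓ hℓ => by rw [ht_of_gt ℓ (mem_filter.1 hℓ).2, mul_zero]
    have hj₀ : t j₀ = 1 := by simp [t]
    rw [sum_eq_sum_filter_lt_add_add_sum_filter_gt _ j₀, hlt, hgt, hj₀, prefixGain]
    ring
  have htail : ∀ j, ∑ ℓ ∈ univ.filter (j ≤ ·), Pi.single j₀ (1 : ℝ) ℓ = if j ≤ j₀ then 1 else 0 :=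
    fun j => by simp
  rw [candidate_eq_sum_add_prefixGain]
  refine ⟨t, Pi.single j₀ 1, fun ℓ => 1 - t ℓ, 0, ht_nonneg, fun ℓ => ?_,
    fun ℓ => sub_nonneg.2 (ht_le_one ℓ), le_rfl, by simp, fun ℓ => ?_, fun j => ?_,
    fun ℓ => add_sub_cancel _ _, by simp, ?_⟩
  · exact (Pi.single_nonneg.2 zero_le_one : (0 : ι → ℝ) ≤ Pi.single j₀ 1) ℓ
  · rcases eq_or_ne ℓ j₀ with rfl | hℓ
    · simp [t]
    · simpa [hℓ] using ht_nonneg ℓ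
  · rw [htail]
    split_ifs with hj
    · exact ht_le_one j
    · exact (ht_of_gt j (not_le.1 hj)).le
  · rw [sum_mul_add_mul_one_sub, hval]; simp [d]

theorem le_of_mem_onePoolValues {v B : ℝ} (hv : v ∈ onePoolValues ct cr cp)
    (hcp : cp + ∑ ℓ, cr ℓ ≤ B)
    (hcand : ∀ j, ct j + (∑ ℓ ∈ univ.filter (· < j), max (ct ℓ) (cr ℓ)) +
      ∑ ℓ ∈ univ.filter (j < ·), cr ℓ ≤ B) :
    v ≤ B := by
  obtain ⟨t, s, r, p, -, hs, -, hp, -, hst, hts, htr, hsp, rfl⟩ := hv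
  have hr : r = fun j => 1 - t j := funext fun j => eq_sub_of_add_eq' (htr j)
  subst hr
  simp only [candidate_eq_sum_add_prefixGain] at hcand
  rw [sum_mul_add_mul_one_sub]
  have hgain := sum_mul_le_sum_prefixGain_mul (fun ℓ => ct ℓ - cr ℓ) s t hst hts
  have hconv := mul_add_sum_mul_le hp hs hsp (c := cp) (M := B - ∑ ℓ, cr ℓ) (by linarith)
    fun j => le_sub_iff_add_le'.mpr (hcand j)
  linarith

end OnePool

/-- closed form for the one-pool worst-case linear program. -/
theorem one_pool_lp_closed_form
    (J : ℕ) (hJ : 0 < J) (ct cr : Fin J → ℝ) (cp : ℝ) :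
    IsGreatest
      {v : ℝ | ∃ (t s r : Fin J → ℝ) (p : ℝ),
        (∀ j, 0 ≤ t j) ∧ (∀ j, 0 ≤ s j) ∧ (∀ j, 0 ≤ r j) ∧ 0 ≤ p ∧
        (∑ j, s j) ≤ 1 ∧
        (∀ j, s j ≤ t j) ∧
        (∀ j : Fin J, t j ≤ ∑ ℓ ∈ Finset.univ.filter (fun ℓ => j ≤ ℓ), s ℓ) ∧
        (∀ j, t j + r j = 1) ∧
        (∑ j, s j) + p = 1 ∧
        v = (∑ j, (ct j * t j + cr j * r j)) + cp * p}
      (max (cp + ∑ ℓ, cr ℓ)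
        (Finset.univ.sup' ⟨⟨0, hJ⟩, Finset.mem_univ _⟩ (fun j : Fin J =>
          ct j + (∑ ℓ ∈ Finset.univ.filter (fun ℓ => ℓ < j), max (ct ℓ) (cr ℓ)) +
            ∑ ℓ ∈ Finset.univ.filter (fun ℓ => j < ℓ), cr ℓ))) := by
  show IsGreatest (onePoolValues ct cr cp) _
  refine ⟨max_sup'_mem _ (cp_add_sum_mem_onePoolValues ct cr cp)
    fun j _ => candidate_mem_onePoolValues ct cr cp j, fun v hv => ?_⟩
  exact le_of_mem_onePoolValues ct cr cp hv (le_max_left _ _)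
    fun j => le_max_of_le_right ((le_sup'_iff _).2 ⟨j, mem_univ j, le_rfl⟩)
end

section
/- Let H = {(t, s, r, p) ∈ {0,1}^J × {0,1}^J × ℝ^J × ℝ : Σ_j s_j ≤ 1; s_j ≤ t_j for all j; t_j + s_ℓ ≤ 1 for all j > ℓ; t_j ≤ Σ_ℓ s_ℓ for all j; t_j + r_j = 1 for all j; Σ_j s_j + p = 1}. Then for every (t, s, r, p) ∈ H and every j ∈ [J], the inequality t_j ≤ Σ_{ℓ ≥ j} s_ℓ holds. -/
/- If `t j = 0` the bound is a sum of nonnegative terms. If `t j = 1`, the conflict constraint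
`t j + s ℓ ≤ 1` forces `s ℓ = 0` for every `ℓ < j`, so the tail sum over `ℓ ≥ j` is the full sum
`∑ ℓ, s ℓ`, which dominates `t j`. -/

theorem valid_inequality_one_pool_general
    (J : ℕ) (t s : Fin J → ℝ)
    (ht : ∀ j, t j = 0 ∨ t j = 1) (hs : ∀ j, s j = 0 ∨ s j = 1)
    (h3 : ∀ j ℓ : Fin J, ℓ < j → t j + s ℓ ≤ 1)
    (h4 : ∀ j : Fin J, t j ≤ ∑ ℓ, s ℓ) :
    ∀ j : Fin J, t j ≤ ∑ ℓ ∈ Finset.univ.filter (fun ℓ => j ≤ ℓ), s ℓ := by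
  intro j
  rcases ht j with htj | htj
  · rw [htj]
    exact Finset.sum_nonneg fun ℓ _ => by rcases hs ℓ with h | h <;> simp [h]
  · have htail : ∑ ℓ ∈ Finset.univ.filter (fun ℓ => j ≤ ℓ), s ℓ = ∑ ℓ, s ℓ := by
      refine Finset.sum_filter_of_ne fun ℓ _ hsℓ => not_lt.mp fun hℓj => ?_
      have := h3 j ℓ hℓj
      rw [htj, (hs ℓ).resolve_left hsℓ] at this
      norm_num at this
    exact htail ▸ h4 j

/-- the valid inequality `t_j ≤ Σ_{ℓ ≥ j} s_ℓ` holds on the single-pool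
mixed-integer set `H`. -/
theorem valid_inequality_one_pool
    (J : ℕ) (t s r : Fin J → ℝ) (p : ℝ)
    (ht : ∀ j, t j = 0 ∨ t j = 1) (hs : ∀ j, s j = 0 ∨ s j = 1)
    (h1 : (∑ j, s j) ≤ 1)
    (h2 : ∀ j, s j ≤ t j)
    (h3 : ∀ j ℓ : Fin J, ℓ < j → t j + s ℓ ≤ 1)
    (h4 : ∀ j : Fin J, t j ≤ ∑ ℓ, s ℓ)
    (h5 : ∀ j, t j + r j = 1)
    (h6 : (∑ j, s j) + p = 1) :
    ∀ j : Fin J, t j ≤ ∑ ℓ ∈ Finset.univ.filter (fun ℓ => j ≤ ℓ), s ℓ :=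
  valid_inequality_one_pool_general J t s ht hs h3 h4
end

section
/- Let H = {(t, s, r, p) ∈ {0,1}^J × {0,1}^J × ℝ^J × ℝ : Σ_j s_j ≤ 1; s_j ≤ t_j for all j; t_j + s_ℓ ≤ 1 for all j > ℓ; t_j ≤ Σ_ℓ s_ℓ for all j; t_j + r_j = 1 for all j; Σ_j s_j + p = 1}, and let H̄ = {(t, s, r, p) ≥ 0 : Σ_j s_j ≤ 1; s_j ≤ t_j for all j; t_j ≤ Σ_{ℓ ≥ j} s_ℓ for all j; t_j + r_j = 1 for all j; Σ_j s_j + p = 1}. Then conv(H) = H̄. -/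
/-!
Write `c_n = ∑_{ℓ < n} s_ℓ`. For a point `(t, s, r, p)` of `H̄` the slots `[c_ℓ, c_{ℓ+1})` tile
`[0, ∑ s) ⊆ [0, 1)`, and the window `[c_j, c_j + t_j)` contains slot `j`, is disjoint from every
earlier slot, and (by the tail inequality `t_j ≤ ∑_{ℓ ≥ j} s_ℓ`) stays inside `[0, ∑ s)`. So for
every `u ∈ [0, 1)`, recording which windows and slots contain `u` gives a point of `H`, and the
average of these points over `u` is `(t, s, r, p)`. As `H` is finite, `conv H` is closed, hence
contains this average.
-/

open Finset MeasureTheory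

namespace OnePool

variable {J : ℕ}

abbrev Point (J : ℕ) := (Fin J → ℝ) × (Fin J → ℝ) × (Fin J → ℝ) × ℝ

def integerPoints (J : ℕ) : Set (Point J) :=
  {x | (∀ j, x.1 j = 0 ∨ x.1 j = 1) ∧ (∀ j, x.2.1 j = 0 ∨ x.2.1 j = 1) ∧
    (∑ j, x.2.1 j) ≤ 1 ∧
    (∀ j, x.2.1 j ≤ x.1 j) ∧
    (∀ j ℓ : Fin J, ℓ < j → x.1 j + x.2.1 ℓ ≤ 1) ∧
    (∀ j : Fin J, x.1 j ≤ ∑ ℓ, x.2.1 ℓ) ∧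
    (∀ j, x.1 j + x.2.2.1 j = 1) ∧
    (∑ j, x.2.1 j) + x.2.2.2 = 1}

def relaxation (J : ℕ) : Set (Point J) :=
  {x | (∀ j, 0 ≤ x.1 j) ∧ (∀ j, 0 ≤ x.2.1 j) ∧ (∀ j, 0 ≤ x.2.2.1 j) ∧ 0 ≤ x.2.2.2 ∧
    (∑ j, x.2.1 j) ≤ 1 ∧
    (∀ j, x.2.1 j ≤ x.1 j) ∧
    (∀ j : Fin J, x.1 j ≤ ∑ ℓ ∈ Finset.univ.filter (fun ℓ => j ≤ ℓ), x.2.1 ℓ) ∧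
    (∀ j, x.1 j + x.2.2.1 j = 1) ∧
    (∑ j, x.2.1 j) + x.2.2.2 = 1}

section PrefixSum

def prefixSum (s : Fin J → ℝ) (n : ℕ) : ℝ := ∑ ℓ ∈ univ.filter (fun ℓ : Fin J => (ℓ : ℕ) < n), s ℓ

variable {s t : Fin J → ℝ}

@[simp] lemma prefixSum_zero : prefixSum s 0 = 0 := by simp [prefixSum]

lemma prefixSum_succ (ℓ : Fin J) : prefixSum s (ℓ + 1) = prefixSum s ℓ + s ℓ := by
  simp only [prefixSum, Nat.lt_succ_iff, ← Fin.le_def, ← Fin.lt_def, filter_ge_eq_Iic,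
    filter_gt_eq_Iio]
  exact (sum_Iio_add_eq_sum_Iic ℓ).symm

lemma prefixSum_of_le {n : ℕ} (hn : J ≤ n) : prefixSum s n = ∑ ℓ, s ℓ := by
  rw [prefixSum, filter_true_of_mem fun ℓ _ => ℓ.isLt.trans_le hn]

lemma prefixSum_add_sum_Ici (j : Fin J) : prefixSum s j + ∑ ℓ with j ≤ ℓ, s ℓ = ∑ ℓ, s ℓ := by
  simp only [prefixSum, ← not_le]
  exact sum_filter_not_add_sum_filter _ _ _

lemma prefixSum_mono (hs : ∀ ℓ, 0 ≤ s ℓ) : Monotone (prefixSum s) := fun m n hmn =>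
  sum_le_sum_of_subset_of_nonneg (fun ℓ => by simp only [mem_filter, mem_univ, true_and]; omega)
    fun ℓ _ _ => hs ℓ

lemma prefixSum_nonneg (hs : ∀ ℓ, 0 ≤ s ℓ) (n : ℕ) : 0 ≤ prefixSum s n :=
  prefixSum_zero (s := s) ▸ prefixSum_mono hs n.zero_le

lemma prefixSum_le_sum (hs : ∀ ℓ, 0 ≤ s ℓ) (n : ℕ) : prefixSum s n ≤ ∑ ℓ, s ℓ :=
  sum_le_sum_of_subset_of_nonneg (filter_subset _ _) fun ℓ _ _ => hs ℓ

lemma prefixSum_add_le_sum (htail : ∀ j, t j ≤ ∑ ℓ with j ≤ ℓ, s ℓ) (j : Fin J) :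
    prefixSum s j + t j ≤ ∑ ℓ, s ℓ := by
  linarith [prefixSum_add_sum_Ici (s := s) j, htail j]

end PrefixSum

lemma integerPoints_finite (J : ℕ) : (integerPoints J).Finite := by
  have hB : (Set.univ.pi fun _ : Fin J => ({0, 1} : Set ℝ)).Finite :=
    Set.Finite.pi fun _ => Set.toFinite _
  refine ((hB.prod hB).image fun y => (y.1, y.2, 1 - y.1, 1 - ∑ ℓ, y.2 ℓ)).subset ?_
  rintro ⟨t, s, r, p⟩ ⟨ht, hs, -, -, -, -, htr, hsp⟩
  refine ⟨(t, s), ⟨fun j _ => ht j, fun j _ => hs j⟩, ?_⟩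
  simp only [Prod.mk.injEq, true_and]
  exact ⟨funext fun j => by simp only [Pi.sub_apply, Pi.one_apply]; linarith [htr j], by linarith⟩

lemma integerPoints_subset_relaxation (J : ℕ) : integerPoints J ⊆ relaxation J := by
  rintro ⟨t, s, r, p⟩ ⟨ht, hs, hsum, hst, hcross, hts, htr, hsp⟩
  have h01 : ∀ {a : ℝ}, a = 0 ∨ a = 1 → 0 ≤ a := by rintro a (rfl | rfl) <;> norm_num
  refine ⟨fun j => h01 (ht j), fun j => h01 (hs j), fun j => ?_, by linarith, hsum, hst,
    fun j => ?_, htr, hsp⟩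
  · rcases ht j with h | h <;> linarith [htr j]
  · rcases ht j with h | h
    · linarith [sum_nonneg fun ℓ (_ : ℓ ∈ univ.filter (j ≤ ·)) => h01 (hs ℓ)]
    · have hprefix : prefixSum s j = 0 := sum_eq_zero fun ℓ hℓ => by
        rcases hs ℓ with h' | h'
        · exact h'
        · linarith [hcross j ℓ (mem_filter.1 hℓ).2]
      linarith [prefixSum_add_sum_Ici (s := s) j, hts j]

lemma convex_relaxation (J : ℕ) : Convex ℝ (relaxation J) := by
  rintro ⟨t, s, r, p⟩ ⟨ht, hs, hr, hp, hsum, hst, htail, htr, hsp⟩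
    ⟨t', s', r', p'⟩ ⟨ht', hs', hr', hp', hsum', hst', htail', htr', hsp'⟩ a b ha hb hab
  have comb : ∀ {u v u' v' : ℝ}, u ≤ v → u' ≤ v' → a * u + b * u' ≤ a * v + b * v' :=
    fun h h' => add_le_add (mul_le_mul_of_nonneg_left h ha) (mul_le_mul_of_nonneg_left h' hb)
  simp only [relaxation, Set.mem_ofPred_eq, Prod.smul_mk, Prod.mk_add_mk, Pi.add_apply,
    Pi.smul_apply, smul_eq_mul, sum_add_distrib, ← mul_sum]
  exact ⟨fun j => by simpa using comb (ht j) (ht' j), fun j => by simpa using comb (hs j) (hs' j),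
    fun j => by simpa using comb (hr j) (hr' j), by simpa using comb hp hp',
    by linarith [comb hsum hsum'], fun j => comb (hst j) (hst' j),
    fun j => comb (htail j) (htail' j), fun j => by linear_combination a * htr j + b * htr' j + hab,
    by linear_combination a * hsp + b * hsp' + hab⟩

section Rounding

variable {s t : Fin J → ℝ}

def slot (s : Fin J → ℝ) (ℓ : Fin J) : Set ℝ := Set.Ico (prefixSum s ℓ) (prefixSum s (ℓ + 1))

def window (t s : Fin J → ℝ) (j : Fin J) : Set ℝ := Set.Ico (prefixSum s j) (prefixSum s j + t j)

noncomputable def rounding (t s : Fin J → ℝ) (u : ℝ) : Point J :=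
  (fun j => (window t s j).indicator 1 u, fun ℓ => (slot s ℓ).indicator 1 u,
    fun j => 1 - (window t s j).indicator 1 u, 1 - ∑ ℓ, (slot s ℓ).indicator 1 u)

lemma Ico_subset_iUnion_slot :
    Set.Ico 0 (∑ ℓ, s ℓ) ⊆ ⋃ ℓ ∈ (univ : Finset (Fin J)), slot s ℓ := by
  intro u hu
  rw [← prefixSum_zero (s := s), ← prefixSum_of_le le_rfl] at hu
  obtain ⟨i, hi, hu⟩ := Set.mem_iUnion₂.1 (Ico_subset_biUnion_Ico J (prefixSum s) hu)
  exact Set.mem_biUnion (mem_univ _) (show u ∈ slot s ⟨i, mem_range.1 hi⟩ from hu)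

lemma disjoint_slot_Ico (hs : ∀ ℓ, 0 ≤ s ℓ) {ℓ j : Fin J} (h : ℓ < j) (b : ℝ) :
    Disjoint (slot s ℓ) (Set.Ico (prefixSum s j) b) := by
  have : prefixSum s (ℓ + 1) ≤ prefixSum s j := prefixSum_mono hs (Nat.succ_le_of_lt h)
  exact Set.disjoint_left.2 fun u hu hu' => by linarith [hu.2, hu'.1]

lemma pairwiseDisjoint_slot (hs : ∀ ℓ, 0 ≤ s ℓ) :
    ((univ : Finset (Fin J)) : Set (Fin J)).PairwiseDisjoint (slot s) := by
  intro ℓ _ j _ hne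
  rcases hne.lt_or_gt with h | h
  · exact disjoint_slot_Ico hs h _
  · exact (disjoint_slot_Ico hs h _).symm

lemma sum_indicator_slot (hs : ∀ ℓ, 0 ≤ s ℓ) (u : ℝ) :
    ∑ ℓ, (slot s ℓ).indicator 1 u =
      (⋃ ℓ ∈ (univ : Finset (Fin J)), slot s ℓ).indicator (1 : ℝ → ℝ) u :=
  (indicator_biUnion_apply _ _ (pairwiseDisjoint_slot hs) u).symm

lemma window_subset_Ico (hs : ∀ ℓ, 0 ≤ s ℓ) (htail : ∀ j, t j ≤ ∑ ℓ with j ≤ ℓ, s ℓ)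
    (j : Fin J) : window t s j ⊆ Set.Ico 0 (∑ ℓ, s ℓ) :=
  Set.Ico_subset_Ico (prefixSum_nonneg hs j) (prefixSum_add_le_sum htail j)

lemma indicator_one_le_one (A : Set ℝ) (u : ℝ) : A.indicator (1 : ℝ → ℝ) u ≤ 1 :=
  Set.indicator_le_self' (fun _ _ => zero_le_one) u

lemma rounding_mem_integerPoints (hs : ∀ ℓ, 0 ≤ s ℓ) (hst : ∀ j, s j ≤ t j)
    (htail : ∀ j, t j ≤ ∑ ℓ with j ≤ ℓ, s ℓ) (u : ℝ) : rounding t s u ∈ integerPoints J := by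
  have h1 : 0 ≤ (1 : ℝ → ℝ) := fun _ => zero_le_one
  refine ⟨fun _ => Set.indicator_eq_zero_or_self _ _ u,
    fun _ => Set.indicator_eq_zero_or_self _ _ u, ?_, fun j => ?_, fun j ℓ hℓ => ?_, fun j => ?_,
    fun _ => add_sub_cancel _ _, add_sub_cancel _ _⟩
  · simpa only [rounding, sum_indicator_slot hs] using indicator_one_le_one _ u
  · refine Set.indicator_le_indicator_of_subset (Set.Ico_subset_Ico_right ?_) h1 u
    rw [prefixSum_succ]
    exact add_le_add_right (hst j) _
  · have hunion : (slot s ℓ ∪ window t s j).indicator (1 : ℝ → ℝ) u =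
        (slot s ℓ).indicator 1 u + (window t s j).indicator 1 u :=
      congr_fun (Set.indicator_union_of_disjoint (disjoint_slot_Ico hs hℓ _) _) u
    dsimp only [rounding]
    linarith [indicator_one_le_one (slot s ℓ ∪ window t s j) u]
  · dsimp only [rounding]
    rw [sum_indicator_slot hs]
    exact Set.indicator_le_indicator_of_subset
      ((window_subset_Ico hs htail j).trans Ico_subset_iUnion_slot) h1 u

instance isProbabilityMeasure_restrict_Ico_zero_one :
    IsProbabilityMeasure (volume.restrict (Set.Ico (0 : ℝ) 1)) :=
  ⟨by simp⟩

lemma integrable_indicator_Ico (a b : ℝ) :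
    Integrable (fun u => (Set.Ico a b).indicator (1 : ℝ → ℝ) u) (volume.restrict (Set.Ico 0 1)) :=
  (integrable_const (1 : ℝ)).indicator measurableSet_Ico

lemma integral_indicator_Ico {a b : ℝ} (ha : 0 ≤ a) (hab : a ≤ b) (hb : b ≤ 1) :
    ∫ u, (Set.Ico a b).indicator 1 u ∂volume.restrict (Set.Ico 0 1) = b - a := by
  rw [integral_indicator_one measurableSet_Ico, measureReal_restrict_apply measurableSet_Ico,
    Set.inter_eq_left.2 (Set.Ico_subset_Ico ha hb), Real.volume_real_Ico_of_le hab]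

lemma integrable_rounding : Integrable (rounding t s) (volume.restrict (Set.Ico 0 1)) :=
  .prodMk (.of_eval fun _ => integrable_indicator_Ico _ _) <|
    .prodMk (.of_eval fun _ => integrable_indicator_Ico _ _) <|
      .prodMk (.of_eval fun _ => (integrable_const 1).sub (integrable_indicator_Ico _ _)) <|
        (integrable_const 1).sub (integrable_finsetSum _ fun _ _ => integrable_indicator_Ico _ _)

lemma integral_rounding {r : Fin J → ℝ} {p : ℝ} (hs : ∀ ℓ, 0 ≤ s ℓ) (ht : ∀ j, 0 ≤ t j)
    (htail : ∀ j, t j ≤ ∑ ℓ with j ≤ ℓ, s ℓ) (hsum : ∑ ℓ, s ℓ ≤ 1)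
    (htr : ∀ j, t j + r j = 1) (hsp : ∑ ℓ, s ℓ + p = 1) :
    ∫ u, rounding t s u ∂volume.restrict (Set.Ico 0 1) = (t, s, r, p) := by
  have hf := integrable_rounding (t := t) (s := s)
  have hw (j : Fin J) :
      ∫ u, (window t s j).indicator 1 u ∂volume.restrict (Set.Ico 0 1) = t j := by
    rw [window, integral_indicator_Ico (prefixSum_nonneg hs j) (le_add_of_nonneg_right (ht j))
      ((prefixSum_add_le_sum htail j).trans hsum), add_sub_cancel_left]
  have hsl (ℓ : Fin J) : ∫ u, (slot s ℓ).indicator 1 u ∂volume.restrict (Set.Ico 0 1) = s ℓ := by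
    rw [slot, integral_indicator_Ico (prefixSum_nonneg hs ℓ) (prefixSum_mono hs ℓ.val.le_succ)
      ((prefixSum_le_sum hs _).trans hsum), prefixSum_succ, add_sub_cancel_left]
  refine Prod.ext ?_ (Prod.ext ?_ (Prod.ext ?_ ?_))
  · funext j
    rw [fst_integral hf, eval_integral (fun j => hf.fst.eval j)]
    exact hw j
  · funext ℓ
    rw [snd_integral hf, fst_integral hf.snd, eval_integral (fun ℓ => hf.snd.fst.eval ℓ)]
    exact hsl ℓ
  · funext j
    rw [snd_integral hf, snd_integral hf.snd, fst_integral hf.snd.snd,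
      eval_integral (fun j => hf.snd.snd.fst.eval j)]
    dsimp only [rounding, window] at hw ⊢
    rw [integral_sub (integrable_const 1) (integrable_indicator_Ico _ _), hw j]
    simp only [integral_const, probReal_univ, smul_eq_mul, mul_one]
    linarith [htr j]
  · rw [snd_integral hf, snd_integral hf.snd, snd_integral hf.snd.snd]
    dsimp only [rounding, slot] at hsl ⊢
    rw [integral_sub (integrable_const 1)
        (integrable_finsetSum _ fun _ _ => integrable_indicator_Ico _ _),
      integral_finsetSum _ fun _ _ => integrable_indicator_Ico _ _]
    simp only [integral_const, probReal_univ, smul_eq_mul, mul_one, hsl]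
    linarith

end Rounding

lemma relaxation_subset_convexHull (J : ℕ) :
    relaxation J ⊆ convexHull ℝ (integerPoints J) := by
  rintro ⟨t, s, r, p⟩ ⟨ht, hs, -, -, hsum, hst, htail, htr, hsp⟩
  rw [← integral_rounding hs ht htail hsum htr hsp]
  exact Convex.integral_mem (convex_convexHull ℝ _)
    ((integerPoints_finite J).isCompact_convexHull ℝ).isClosed
    (ae_of_all _ fun u => subset_convexHull ℝ _ (rounding_mem_integerPoints hs hst htail u))
    integrable_rounding

end OnePool

/-- single-pool convex hull characterization, `conv(H) = H̄`. -/
theorem convexHull_one_pool_set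
    (J : ℕ) :
    convexHull ℝ
      {x : (Fin J → ℝ) × (Fin J → ℝ) × (Fin J → ℝ) × ℝ |
        (∀ j, x.1 j = 0 ∨ x.1 j = 1) ∧ (∀ j, x.2.1 j = 0 ∨ x.2.1 j = 1) ∧
        (∑ j, x.2.1 j) ≤ 1 ∧
        (∀ j, x.2.1 j ≤ x.1 j) ∧
        (∀ j ℓ : Fin J, ℓ < j → x.1 j + x.2.1 ℓ ≤ 1) ∧
        (∀ j : Fin J, x.1 j ≤ ∑ ℓ, x.2.1 ℓ) ∧
        (∀ j, x.1 j + x.2.2.1 j = 1) ∧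
        (∑ j, x.2.1 j) + x.2.2.2 = 1}
      =
      {x : (Fin J → ℝ) × (Fin J → ℝ) × (Fin J → ℝ) × ℝ |
        (∀ j, 0 ≤ x.1 j) ∧ (∀ j, 0 ≤ x.2.1 j) ∧ (∀ j, 0 ≤ x.2.2.1 j) ∧ 0 ≤ x.2.2.2 ∧
        (∑ j, x.2.1 j) ≤ 1 ∧
        (∀ j, x.2.1 j ≤ x.1 j) ∧
        (∀ j : Fin J, x.1 j ≤ ∑ ℓ ∈ Finset.univ.filter (fun ℓ => j ≤ ℓ), x.2.1 ℓ) ∧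
        (∀ j, x.1 j + x.2.2.1 j = 1) ∧
        (∑ j, x.2.1 j) + x.2.2.2 = 1} :=
  (convexHull_min (OnePool.integerPoints_subset_relaxation J)
    (OnePool.convex_relaxation J)).antisymm (OnePool.relaxation_subset_convexHull J)
end

section
/- Consider the integer program: minimize Σ_{j=1}^J [(c_x − c_e) x_j − c_e Σ_{i : j ∈ P_i} z_{ij}] subject to x_j + Σ_{i : j ∈ P_i} z_{ij} ≥ b_j for all j ∈ [J], Σ_{j ∈ P_i} z_{ij} ≤ y_i for all i ∈ [I], with x_j, z_{ij} ∈ ℤ_{≥0}, where all b_j, y_i are integers. The constraint matrix of this program (after multiplying the second family of constraints by −1) is totally unimodular; consequently, the optimal value of the integer program equals the optimal value of its continuous (LP) relaxation. -/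
/-!
Every column of the constraint matrix has at most two nonzero entries, a `1` in a covering row
and a `-1` in a capacity row. Hence either all columns of a square submatrix sum to zero, and its
determinant vanishes, or some column has a single nonzero entry, and expanding along it reduces to
a smaller submatrix of the same kind.

The equality of optimal values needs no polyhedral theory. If some `y i < 0` both programs are
infeasible. Otherwise write `d = b⁺`, `c = y` and let
`δ = max_S (d(S) - c(N(S)))` be the Hall deficiency of the bipartite graph `j ∈ P i`. Hall's
theorem, applied to unit copies of demands and capacities together with `δ` dummy capacity units
adjacent to every job, gives an integral point that uses the whole capacity of every shift with
nonempty `P i` and has `∑ x ≤ δ`. Every LP point has `∑ x ≥ δ` (sum the covering constraints over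
a maximizing `S`) and covers at most that capacity, so as `c_x - c_e ≥ 0` and `c_e ≥ 0` the
integral point is optimal for both programs.
-/

open Finset

namespace Matrix

variable {m m' n n' R : Type*} [CommRing R]

def HasCancellingColumnPairs (A : Matrix m n R) : Prop :=
  ∀ j i₁ i₂, i₁ ≠ i₂ → A i₁ j ≠ 0 → A i₂ j ≠ 0 →
    A i₁ j + A i₂ j = 0 ∧ ∀ i, i ≠ i₁ → i ≠ i₂ → A i j = 0

lemma HasCancellingColumnPairs.submatrix {A : Matrix m n R} (hA : A.HasCancellingColumnPairs)
    {f : m' → m} (hf : f.Injective) (g : n' → n) :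
    (A.submatrix f g).HasCancellingColumnPairs := by
  intro j i₁ i₂ hne h₁ h₂
  obtain ⟨hsum, hzero⟩ := hA (g j) (f i₁) (f i₂) (hf.ne hne) h₁ h₂
  exact ⟨hsum, fun i hi₁ hi₂ => hzero (f i) (hf.ne hi₁) (hf.ne hi₂)⟩

lemma HasCancellingColumnPairs.eq_zero_of_sum_ne_zero [Fintype m] {A : Matrix m n R}
    (hA : A.HasCancellingColumnPairs) {j : n} (hj : ∑ i, A i j ≠ 0) {i₀ i : m}
    (hi₀ : A i₀ j ≠ 0) (hi : i ≠ i₀) : A i j = 0 := by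
  by_contra h
  obtain ⟨hsum, hzero⟩ := hA j i i₀ hi h hi₀
  exact hj <| by rw [Fintype.sum_eq_add i i₀ hi fun i' hi' => hzero i' hi'.1 hi'.2, hsum]

lemma det_mem_range_signTypeCast_of_hasCancellingColumnPairs :
    ∀ {k : ℕ} {A : Matrix (Fin k) (Fin k) R}, (∀ i j, A i j ∈ Set.range SignType.cast) →
      A.HasCancellingColumnPairs → A.det ∈ Set.range SignType.cast
  | 0, A, _, _ => ⟨1, by simp⟩
  | k + 1, A, hent, hA => by
    obtain hsum | ⟨j, hj⟩ := forall_or_exists_not fun j => ∑ i, A i j = 0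
    · refine ⟨0, ?_⟩
      rw [det_eq_sum_column_mul_submatrix_succAbove_succAbove_det A 0 0 fun j _ => hsum j,
        hsum 0]
      simp
    obtain ⟨i₀, -, hi₀⟩ := Finset.exists_ne_zero_of_sum_ne_zero hj
    have hdet : A.det =
        (-1) ^ (i₀ + j : ℕ) * A i₀ j * (A.submatrix i₀.succAbove j.succAbove).det := by
      rw [det_succ_column A j, Finset.sum_eq_single i₀
        (fun i _ hi => by rw [hA.eq_zero_of_sum_ne_zero hj hi₀ hi]; ring) (by simp)]
    obtain ⟨s, hs⟩ := hent i₀ j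
    obtain ⟨t, ht⟩ : (A.submatrix i₀.succAbove j.succAbove).det ∈ Set.range SignType.cast :=
      det_mem_range_signTypeCast_of_hasCancellingColumnPairs (fun _ _ => hent _ _)
        (hA.submatrix (f := i₀.succAbove) Fin.succAbove_right_injective j.succAbove)
    exact ⟨(-1) ^ (i₀ + j : ℕ) * s * t, by rw [hdet, ← hs, ← ht]; simp⟩

theorem isTotallyUnimodular_of_hasCancellingColumnPairs {A : Matrix m n R}
    (hent : ∀ i j, A i j ∈ Set.range SignType.cast) (hA : A.HasCancellingColumnPairs) :
    A.IsTotallyUnimodular := fun _ _ g hf _ =>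
  det_mem_range_signTypeCast_of_hasCancellingColumnPairs (fun _ _ => hent _ _)
    (hA.submatrix hf g)

end Matrix

section

variable {ι κ : Type*}

def staffingMatrix (R : Type*) [Ring R] [DecidableEq ι] [DecidableEq κ] (P : ι → Finset κ) :
    Matrix (κ ⊕ ι) (κ ⊕ (ι × κ)) R :=
  fun r c => match r, c with
  | Sum.inl j, Sum.inl j' => if j' = j then 1 else 0
  | Sum.inl j, Sum.inr (i, j') => if j' = j ∧ j ∈ P i then 1 else 0
  | Sum.inr _, Sum.inl _ => 0
  | Sum.inr i, Sum.inr (i', j) => if i' = i ∧ j ∈ P i then -1 else 0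

theorem staffingMatrix_isTotallyUnimodular (R : Type*) [CommRing R] [DecidableEq ι]
    [DecidableEq κ] (P : ι → Finset κ) : (staffingMatrix R P).IsTotallyUnimodular := by
  refine Matrix.isTotallyUnimodular_of_hasCancellingColumnPairs (fun r c => ?_) ?_
  · rcases r with j | i <;> rcases c with j' | ⟨i', j'⟩ <;> simp only [staffingMatrix] <;>
      try split_ifs
    all_goals first
      | exact ⟨0, SignType.coe_zero⟩ | exact ⟨1, SignType.coe_one⟩
      | exact ⟨-1, SignType.coe_neg_one⟩
  · rintro (j | ⟨i, j⟩) (j₁ | i₁) (j₂ | i₂) hne h₁ h₂ <;> simp_all [staffingMatrix] <;> grind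

def neighbors [Fintype ι] [DecidableEq κ] (P : ι → Finset κ) (S : Finset κ) : Finset ι :=
  {i | ∃ j ∈ S, j ∈ P i}

lemma card_filter_sigma_fst [Fintype κ] [DecidableEq κ] {n : κ → ℕ} (j : κ) :
    #{u : Σ j, Fin (n j) | u.1 = j} = n j := by
  rw [show ({u | u.1 = j} : Finset (Σ j, Fin (n j))) = ({j} : Finset κ).sigma fun _ => univ by
    ext ⟨_, _⟩; simp]
  simp

lemma card_le_card_biUnion_of_hall [Fintype ι] [DecidableEq ι] [DecidableEq κ]
    (P : ι → Finset κ) (d : κ → ℕ) (c : ι → ℕ)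
    (h : ∀ S : Finset κ, ∑ j ∈ S, d j ≤ ∑ i ∈ neighbors P S, c i)
    (W : Finset (Σ j, Fin (d j))) :
    #W ≤ #(W.biUnion fun u => ({a | u.1 ∈ P a.1} : Finset (Σ i, Fin (c i)))) := by
  set S := W.image Sigma.fst
  calc #W ≤ #(S.sigma fun _ => univ) :=
        card_le_card fun u hu => mem_sigma.2 ⟨mem_image_of_mem _ hu, mem_univ _⟩
    _ = ∑ j ∈ S, d j := by simp [card_sigma]
    _ ≤ ∑ i ∈ neighbors P S, c i := h S
    _ = #((neighbors P S).sigma fun _ => univ) := by simp [card_sigma]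
    _ ≤ _ := card_le_card ?_
  rintro ⟨i, l⟩ hil
  obtain ⟨j, hjS, hjP⟩ := (mem_filter.1 (mem_sigma.1 hil).1).2
  obtain ⟨u, hu, rfl⟩ := mem_image.1 hjS
  exact mem_biUnion.2 ⟨u, hu, mem_filter.2 ⟨mem_univ _, hjP⟩⟩

theorem exists_bMatching_of_hall [Fintype ι] [Fintype κ] [DecidableEq κ] (P : ι → Finset κ)
    (d : κ → ℕ) (c : ι → ℕ) (h : ∀ S : Finset κ, ∑ j ∈ S, d j ≤ ∑ i ∈ neighbors P S, c i) :
    ∃ z : ι → κ → ℕ, (∀ i j, j ∉ P i → z i j = 0) ∧ (∀ i, ∑ j, z i j ≤ c i) ∧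
      ∀ j, ∑ i, z i j = d j := by
  classical
  obtain ⟨F, hFinj, hF⟩ := (all_card_le_biUnion_card_iff_exists_injective _).1
    (card_le_card_biUnion_of_hall P d c h)
  simp only [mem_filter, mem_univ, true_and] at hF
  refine ⟨fun i j => #{u | u.1 = j ∧ (F u).1 = i}, fun i j hj => ?_, fun i => ?_, fun j => ?_⟩
  · exact card_eq_zero.2 <| filter_eq_empty_iff.2 fun u _ ⟨hu, hFu⟩ => hj (hu ▸ hFu ▸ hF u)
  · calc ∑ j, #{u | u.1 = j ∧ (F u).1 = i}
        = #{u | (F u).1 = i} := by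
          rw [card_eq_sum_card_fiberwise (f := Sigma.fst) (t := univ) (by simp)]
          simp only [filter_filter, and_comm]
      _ ≤ #{a : Σ i, Fin (c i) | a.1 = i} :=
          card_le_card_of_injOn F (fun u hu => by simpa using hu) hFinj.injOn
      _ = c i := card_filter_sigma_fst i
  · calc ∑ i, #{u | u.1 = j ∧ (F u).1 = i}
        = #{u : Σ j, Fin (d j) | u.1 = j} := by
          rw [card_eq_sum_card_fiberwise (f := fun u => (F u).1) (t := univ) (by simp)]
          simp only [filter_filter]
      _ = d j := card_filter_sigma_fst j

theorem exists_bMatching_of_deficiency [Fintype ι] [Fintype κ] [DecidableEq κ]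
    (P : ι → Finset κ) (d : κ → ℕ) (c : ι → ℕ) (t : ℕ)
    (h : ∀ S : Finset κ, ∑ j ∈ S, d j ≤ t + ∑ i ∈ neighbors P S, c i) :
    ∃ z : ι → κ → ℕ, (∀ i j, j ∉ P i → z i j = 0) ∧ (∀ i, ∑ j, z i j ≤ c i) ∧
      ∑ j, (d j - ∑ i, z i j) ≤ t := by
  -- The extra shift `none` has capacity `t` and may serve every job.
  have hOpt : ∀ S : Finset κ, ∑ j ∈ S, d j ≤
      ∑ o ∈ neighbors (fun o : Option ι => o.elim univ P) S, o.elim t c := by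
    intro S
    rcases S.eq_empty_or_nonempty with rfl | ⟨j₀, hj₀⟩
    · simp
    refine (h S).trans_eq ?_
    simp only [neighbors, sum_filter, Fintype.sum_option]
    simp only [mem_univ, and_true, Option.elim]
    rw [if_pos ⟨j₀, hj₀⟩]
    congr
  obtain ⟨z, hsupp, hrow, hcol⟩ := exists_bMatching_of_hall _ d _ hOpt
  refine ⟨fun i => z (some i), fun i => hsupp (some i), fun i => hrow (some i), ?_⟩
  calc ∑ j, (d j - ∑ i, z (some i) j) = ∑ j, z none j := by
        refine sum_congr rfl fun j _ => ?_
        rw [← hcol j, Fintype.sum_option]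
        omega
    _ ≤ t := hrow none

def hallDeficiency [Fintype ι] [Fintype κ] [DecidableEq κ] (P : ι → Finset κ) (d : κ → ℕ)
    (c : ι → ℕ) : ℕ :=
  univ.sup fun S : Finset κ => ∑ j ∈ S, d j - ∑ i ∈ neighbors P S, c i

lemma sum_le_hallDeficiency_add [Fintype ι] [Fintype κ] [DecidableEq κ] (P : ι → Finset κ)
    (d : κ → ℕ) (c : ι → ℕ) (S : Finset κ) :
    ∑ j ∈ S, d j ≤ hallDeficiency P d c + ∑ i ∈ neighbors P S, c i :=
  tsub_le_iff_right.1 <| le_sup (f := fun S => ∑ j ∈ S, d j - ∑ i ∈ neighbors P S, c i)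
    (mem_univ S)

lemma exists_le_sum_eq_of_sum_le [Fintype κ] [DecidableEq κ] {s : Finset κ} (hs : s.Nonempty)
    {f : κ → ℕ} (hf : ∀ j ∉ s, f j = 0) {n : ℕ} (h : ∑ j, f j ≤ n) :
    ∃ g : κ → ℕ, f ≤ g ∧ (∀ j ∉ s, g j = 0) ∧ ∑ j, g j = n := by
  obtain ⟨j₀, hj₀⟩ := hs
  refine ⟨f + Pi.single j₀ (n - ∑ j, f j), fun j => Nat.le_add_right _ _, fun j hj => ?_, ?_⟩
  · simp [hf j hj, ne_of_mem_of_not_mem hj₀ hj |>.symm]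
  · simp only [Pi.add_apply, sum_add_distrib, Fintype.sum_pi_single']
    omega

lemma exists_saturating_le [Fintype κ] [DecidableEq κ] (P : ι → Finset κ) (c : ι → ℕ)
    {z : ι → κ → ℕ} (hsupp : ∀ i j, j ∉ P i → z i j = 0) (hrow : ∀ i, ∑ j, z i j ≤ c i) :
    ∃ z' : ι → κ → ℕ, z ≤ z' ∧ (∀ i j, j ∉ P i → z' i j = 0) ∧ (∀ i, ∑ j, z' i j ≤ c i) ∧
      ∀ i, (P i).Nonempty → ∑ j, z' i j = c i := by
  have hrow' : ∀ i, ∃ w : κ → ℕ, z i ≤ w ∧ (∀ j ∉ P i, w j = 0) ∧ ∑ j, w j ≤ c i ∧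
      ((P i).Nonempty → ∑ j, w j = c i) := by
    intro i
    rcases (P i).eq_empty_or_nonempty with hP | hP
    · exact ⟨z i, le_rfl, hsupp i, hrow i, by simp [hP]⟩
    · obtain ⟨w, hw, hwP, hsum⟩ := exists_le_sum_eq_of_sum_le hP (hsupp i) (hrow i)
      exact ⟨w, hw, hwP, hsum.le, fun _ => hsum⟩
  choose z' hle hsupp' hrow' hsat using hrow'
  exact ⟨z', hle, hsupp', hrow', hsat⟩

theorem exists_saturating_nat_cover [Fintype ι] [Fintype κ] [DecidableEq κ] (P : ι → Finset κ)
    (d : κ → ℕ) (c : ι → ℕ) :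
    ∃ (x : κ → ℕ) (z : ι → κ → ℕ), (∀ i j, j ∉ P i → z i j = 0) ∧
      (∀ j, d j ≤ x j + ∑ i, z i j) ∧ (∀ i, ∑ j, z i j ≤ c i) ∧
      (∀ i, (P i).Nonempty → ∑ j, z i j = c i) ∧ ∑ j, x j ≤ hallDeficiency P d c := by
  obtain ⟨z, hsupp, hrow, hdef⟩ :=
    exists_bMatching_of_deficiency P d c _ (sum_le_hallDeficiency_add P d c)
  obtain ⟨z', hle, hsupp', hrow', hsat⟩ := exists_saturating_le P c hsupp hrow
  refine ⟨fun j => d j - ∑ i, z' i j, z', hsupp', fun j => le_tsub_add, hrow', hsat, ?_⟩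
  calc ∑ j, (d j - ∑ i, z' i j) ≤ ∑ j, (d j - ∑ i, z i j) :=
        sum_le_sum fun j _ => Nat.sub_le_sub_left (sum_le_sum fun i _ => hle i j) _
    _ ≤ _ := hdef

lemma sum_sum_le_sum_neighbors [Fintype ι] [DecidableEq κ] (P : ι → Finset κ)
    {z : ι → κ → ℝ} (hz : ∀ i j, 0 ≤ z i j) (hsupp : ∀ i j, j ∉ P i → z i j = 0)
    [Fintype κ] (S : Finset κ) :
    ∑ j ∈ S, ∑ i, z i j ≤ ∑ i ∈ neighbors P S, ∑ j, z i j := by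
  rw [sum_comm]
  calc ∑ i, ∑ j ∈ S, z i j = ∑ i ∈ neighbors P S, ∑ j ∈ S, z i j := by
        refine (sum_subset (subset_univ _) fun i _ hi => sum_eq_zero fun j hj => ?_).symm
        exact hsupp i j fun hjP => hi (mem_filter.2 ⟨mem_univ _, j, hj, hjP⟩)
    _ ≤ _ := sum_le_sum fun i _ => sum_le_univ_sum_of_nonneg fun j => hz i j

theorem hallDeficiency_le_sum [Fintype ι] [Fintype κ] [DecidableEq κ] (P : ι → Finset κ)
    (d : κ → ℕ) (c : ι → ℕ) {x : κ → ℝ} {z : ι → κ → ℝ} (hx : ∀ j, 0 ≤ x j)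
    (hz : ∀ i j, 0 ≤ z i j) (hsupp : ∀ i j, j ∉ P i → z i j = 0)
    (hcov : ∀ j, (d j : ℝ) ≤ x j + ∑ i, z i j) (hrow : ∀ i, ∑ j, z i j ≤ c i) :
    (hallDeficiency P d c : ℝ) ≤ ∑ j, x j := by
  obtain ⟨S, -, hS⟩ := exists_mem_eq_sup univ univ_nonempty
    fun S => ∑ j ∈ S, d j - ∑ i ∈ neighbors P S, c i
  rw [hallDeficiency, hS]
  rcases le_total (∑ j ∈ S, d j) (∑ i ∈ neighbors P S, c i) with hle | hle
  · rw [Nat.sub_eq_zero_of_le hle, Nat.cast_zero]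
    exact sum_nonneg fun j _ => hx j
  push_cast [Nat.cast_sub hle]
  calc ∑ j ∈ S, (d j : ℝ) - ∑ i ∈ neighbors P S, (c i : ℝ)
      ≤ ∑ j ∈ S, (x j + ∑ i, z i j) - ∑ i ∈ neighbors P S, ∑ j, z i j :=
        sub_le_sub (sum_le_sum fun j _ => hcov j) (sum_le_sum fun i _ => hrow i)
    _ = ∑ j ∈ S, x j + (∑ j ∈ S, ∑ i, z i j - ∑ i ∈ neighbors P S, ∑ j, z i j) := by
        rw [sum_add_distrib]; ring
    _ ≤ ∑ j ∈ S, x j :=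
        add_le_of_nonpos_right (sub_nonpos.2 (sum_sum_le_sum_neighbors P hz hsupp S))
    _ ≤ ∑ j, x j := sum_le_univ_sum_of_nonneg hx

lemma sum_filter_mem_eq_sum [Fintype ι] [DecidableEq κ] {P : ι → Finset κ} {M : Type*}
    [AddCommMonoid M] {z : ι → κ → M} (hsupp : ∀ i j, j ∉ P i → z i j = 0) (j : κ) :
    ∑ i ∈ univ.filter (fun i => j ∈ P i), z i j = ∑ i, z i j :=
  sum_filter_of_ne fun i _ hz => by_contra fun hj => hz (hsupp i j hj)

lemma sum_mem_eq_sum [Fintype κ] {P : ι → Finset κ} {M : Type*} [AddCommMonoid M]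
    {z : ι → κ → M} (hsupp : ∀ i j, j ∉ P i → z i j = 0) (i : ι) :
    ∑ j ∈ P i, z i j = ∑ j, z i j :=
  sum_subset (subset_univ _) fun j _ hj => hsupp i j hj

lemma natCast_toNat_eq_max (a : ℤ) : (a.toNat : ℝ) = max (a : ℝ) 0 := by
  exact_mod_cast Int.toNat_eq_max a

variable [Fintype ι] [Fintype κ] [DecidableEq κ] (P : ι → Finset κ) (b : κ → ℤ) (y : ι → ℤ)
  (cx ce : ℝ)

def staffingIPValues : Set ℝ :=
  {v | ∃ (x : κ → ℕ) (z : ι → κ → ℕ), (∀ i j, j ∉ P i → z i j = 0) ∧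
    (∀ j, b j ≤ (x j : ℤ) + ∑ i ∈ univ.filter (fun i => j ∈ P i), (z i j : ℤ)) ∧
    (∀ i, (∑ j ∈ P i, (z i j : ℤ)) ≤ y i) ∧
    v = ∑ j, ((cx - ce) * (x j : ℝ) - ce * ∑ i ∈ univ.filter (fun i => j ∈ P i), (z i j : ℝ))}

def staffingLPValues : Set ℝ :=
  {v | ∃ (x : κ → ℝ) (z : ι → κ → ℝ), (∀ j, 0 ≤ x j) ∧ (∀ i j, 0 ≤ z i j) ∧
    (∀ i j, j ∉ P i → z i j = 0) ∧
    (∀ j, (b j : ℝ) ≤ x j + ∑ i ∈ univ.filter (fun i => j ∈ P i), z i j) ∧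
    (∀ i, (∑ j ∈ P i, z i j) ≤ (y i : ℝ)) ∧
    v = ∑ j, ((cx - ce) * x j - ce * ∑ i ∈ univ.filter (fun i => j ∈ P i), z i j)}

variable {P}

lemma staffing_cost_eq {x : κ → ℝ} {z : ι → κ → ℝ} (hsupp : ∀ i j, j ∉ P i → z i j = 0) :
    ∑ j, ((cx - ce) * x j - ce * ∑ i ∈ univ.filter (fun i => j ∈ P i), z i j) =
      (cx - ce) * ∑ j, x j - ce * ∑ j, ∑ i, z i j := by
  simp only [sum_filter_mem_eq_sum hsupp, sum_sub_distrib, mul_sum]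

variable {cx ce}

lemma staffingIPValues_subset_staffingLPValues :
    staffingIPValues P b y cx ce ⊆ staffingLPValues P b y cx ce := by
  rintro v ⟨x, z, hsupp, hcov, hcap, rfl⟩
  refine ⟨fun j => x j, fun i j => z i j, fun j => (x j).cast_nonneg,
    fun i j => (z i j).cast_nonneg, fun i j hj => by simp [hsupp i j hj], fun j => ?_, fun i => ?_,
    rfl⟩
  · beta_reduce
    exact_mod_cast hcov j
  · beta_reduce
    exact_mod_cast hcap i

lemma staffingLPValues_eq_empty {i : ι} (hi : y i < 0) : staffingLPValues P b y cx ce = ∅ := by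
  refine Set.eq_empty_of_forall_notMem ?_
  rintro v ⟨x, z, -, hz, -, -, hcap, -⟩
  have : (y i : ℝ) < 0 := by exact_mod_cast hi
  linarith [hcap i, sum_nonneg fun j (_ : j ∈ P i) => hz i j]

lemma le_of_mem_staffingLPValues (hce : 0 ≤ ce) (hcx : ce ≤ cx) {v : ℝ}
    (hv : v ∈ staffingLPValues P b y cx ce) :
    (cx - ce) * hallDeficiency P (fun j => (b j).toNat) (fun i => (y i).toNat) -
      ce * ∑ i ∈ neighbors P univ, ((y i).toNat : ℝ) ≤ v := by
  obtain ⟨x, z, hx, hz, hsupp, hcov, hcap, rfl⟩ := hv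
  have hrow : ∀ i, ∑ j, z i j ≤ ((y i).toNat : ℝ) := fun i => by
    rw [← sum_mem_eq_sum hsupp, natCast_toNat_eq_max]
    exact le_max_of_le_left (hcap i)
  have hcov' : ∀ j, ((b j).toNat : ℝ) ≤ x j + ∑ i, z i j := fun j => by
    rw [← sum_filter_mem_eq_sum hsupp, natCast_toNat_eq_max]
    exact max_le (hcov j) (add_nonneg (hx j) (sum_nonneg fun i _ => hz i j))
  rw [staffing_cost_eq cx ce hsupp]
  exact sub_le_sub
    (mul_le_mul_of_nonneg_left (hallDeficiency_le_sum P _ _ hx hz hsupp hcov' hrow)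
      (sub_nonneg.2 hcx))
    (mul_le_mul_of_nonneg_left
      ((sum_sum_le_sum_neighbors P hz hsupp univ).trans (sum_le_sum fun i _ => hrow i)) hce)

lemma exists_mem_staffingIPValues_le (hce : 0 ≤ ce) (hcx : ce ≤ cx) (hy : ∀ i, 0 ≤ y i) :
    ∃ w ∈ staffingIPValues P b y cx ce,
      w ≤ (cx - ce) * hallDeficiency P (fun j => (b j).toNat) (fun i => (y i).toNat) -
        ce * ∑ i ∈ neighbors P univ, ((y i).toNat : ℝ) := by
  obtain ⟨x, z, hsupp, hcov, hrow, hsat, hdef⟩ :=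
    exists_saturating_nat_cover P (fun j => (b j).toNat) (fun i => (y i).toNat)
  refine ⟨_, ⟨x, z, hsupp, fun j => ?_, fun i => ?_, rfl⟩, ?_⟩
  · rw [← Nat.cast_sum, sum_filter_mem_eq_sum hsupp]
    exact (Int.self_le_toNat (b j)).trans (by exact_mod_cast hcov j)
  · rw [← Nat.cast_sum, sum_mem_eq_sum hsupp, ← Int.toNat_of_nonneg (hy i)]
    exact_mod_cast hrow i
  have hZ : ∑ i ∈ neighbors P univ, ((y i).toNat : ℝ) ≤ ∑ j, ∑ i, (z i j : ℝ) := by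
    rw [sum_comm]
    refine (sum_le_sum fun i hi => ?_).trans (sum_le_univ_sum_of_nonneg fun i => ?_)
    · obtain ⟨j, -, hj⟩ := (mem_filter.1 hi).2
      exact_mod_cast (hsat i ⟨j, hj⟩).ge
    · positivity
  rw [staffing_cost_eq cx ce (fun i j hj => by simp [hsupp i j hj])]
  exact sub_le_sub
    (mul_le_mul_of_nonneg_left (by exact_mod_cast hdef) (sub_nonneg.2 hcx))
    (mul_le_mul_of_nonneg_left hZ hce)

theorem sInf_staffingIPValues_eq (hce : 0 ≤ ce) (hcx : ce ≤ cx) :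
    sInf (staffingIPValues P b y cx ce) = sInf (staffingLPValues P b y cx ce) := by
  obtain hy | ⟨i, hi⟩ := forall_or_exists_not fun i => 0 ≤ y i
  · obtain ⟨w, hw, hwle⟩ := exists_mem_staffingIPValues_le b y hce hcx hy
    have hLP : IsLeast (staffingLPValues P b y cx ce) w :=
      ⟨staffingIPValues_subset_staffingLPValues b y hw,
        fun v hv => hwle.trans (le_of_mem_staffingLPValues b y hce hcx hv)⟩
    have hIP : IsLeast (staffingIPValues P b y cx ce) w :=
      ⟨hw, fun v hv => hLP.2 (staffingIPValues_subset_staffingLPValues b y hv)⟩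
    rw [hIP.csInf_eq, hLP.csInf_eq]
  · have hLP : staffingLPValues P b y cx ce = ∅ := staffingLPValues_eq_empty b y (not_le.1 hi)
    have hIP : staffingIPValues P b y cx ce = ∅ :=
      Set.subset_empty_iff.1 (hLP ▸ staffingIPValues_subset_staffingLPValues b y)
    rw [hIP, hLP]

end

/-- the constraint matrix of the staffing integer program is totally
unimodular, and consequently the optimal value of the integer program equals the
optimal value of its continuous (LP) relaxation. -/
theorem staffing_matrix_TU_and_IP_eq_LP
    (I J : ℕ) (P : Fin I → Finset (Fin J)) (b : Fin J → ℤ) (y : Fin I → ℤ)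
    (cx ce : ℝ) (hce : 0 ≤ ce) (hcx : ce ≤ cx) :
    -- total unimodularity of the constraint matrix
    (∀ (k : ℕ) (ri : Fin k → Fin J ⊕ Fin I) (ci : Fin k → Fin J ⊕ (Fin I × Fin J)),
      Function.Injective ri → Function.Injective ci →
      (Matrix.submatrix
        (fun (r : Fin J ⊕ Fin I) (c : Fin J ⊕ (Fin I × Fin J)) =>
          match r, c with
          | Sum.inl j, Sum.inl j' => if j' = j then (1 : ℝ) else 0
          | Sum.inl j, Sum.inr (i, j') => if j' = j ∧ j ∈ P i then (1 : ℝ) else 0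
          | Sum.inr _, Sum.inl _ => (0 : ℝ)
          | Sum.inr i, Sum.inr (i', j) => if i' = i ∧ j ∈ P i then (-1 : ℝ) else 0)
        ri ci).det ∈ ({-1, 0, 1} : Set ℝ)) ∧
    -- the integer program and its LP relaxation have the same optimal value
    sInf {v : ℝ | ∃ (x : Fin J → ℕ) (z : Fin I → Fin J → ℕ),
        (∀ i j, j ∉ P i → z i j = 0) ∧
        (∀ j : Fin J, b j ≤ (x j : ℤ) +
          ∑ i ∈ Finset.univ.filter (fun i => j ∈ P i), (z i j : ℤ)) ∧
        (∀ i : Fin I, (∑ j ∈ P i, (z i j : ℤ)) ≤ y i) ∧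
        v = ∑ j, ((cx - ce) * (x j : ℝ) -
          ce * ∑ i ∈ Finset.univ.filter (fun i => j ∈ P i), (z i j : ℝ))}
    = sInf {v : ℝ | ∃ (x : Fin J → ℝ) (z : Fin I → Fin J → ℝ),
        (∀ j, 0 ≤ x j) ∧ (∀ i j, 0 ≤ z i j) ∧
        (∀ i j, j ∉ P i → z i j = 0) ∧
        (∀ j : Fin J, (b j : ℝ) ≤ x j +
          ∑ i ∈ Finset.univ.filter (fun i => j ∈ P i), z i j) ∧
        (∀ i : Fin I, (∑ j ∈ P i, z i j) ≤ (y i : ℝ)) ∧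
        v = ∑ j, ((cx - ce) * x j -
          ce * ∑ i ∈ Finset.univ.filter (fun i => j ∈ P i), z i j)} := by
  refine ⟨fun k ri ci hri hci => ?_, sInf_staffingIPValues_eq b y hce hcx⟩
  have hdet : ((staffingMatrix ℝ P).submatrix ri ci).det ∈ ({-1, 0, 1} : Set ℝ) := by
    obtain ⟨s, hs⟩ := staffingMatrix_isTotallyUnimodular ℝ P k ri ci hri hci
    rw [← hs]
    cases s <;> simp
  -- The statement's `match` is a matcher of its own, equal to `staffingMatrix` only casewise.
  convert hdet using 3
  congr 1
  funext r c
  rcases r with _ | _ <;> rcases c with _ | ⟨_, _⟩ <;> rfl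
end

section
/- Consider the recourse cost V(w̃, ỹ, d̃) defined as the minimum of Σ_j (c_x x_j − c_e e_j) over nonnegative integer variables z_{ij} (i ∈ [I], j ∈ P_i), x_j, e_j (j ∈ [J]) subject to Σ_{i : j ∈ P_i} z_{ij} + x_j − e_j = d̃_j − w̃_j for all j and Σ_{j ∈ P_i} z_{ij} ≤ ỹ_i for all i, where d̃_j, w̃_j, ỹ_i are given integers with ỹ_i ≥ 0. Then V(w̃, ỹ, d̃) is unchanged if the integrality restrictions on z, x, e are relaxed to nonnegativity (z_{ij}, x_j, e_j ≥ 0). -/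
/-!
Writing `S j` for the flow reaching site `j`, `r j = d j - w j` and `t j = max (r j) 0`, the
balance equation eliminates `e`, and the cost becomes `(cx - ce) ∑ x - ce ∑ S + ce ∑ r` with
`x j ≥ t j - min (S j) (t j)`. Since `cx - ce ≥ 0` and `ce ≥ 0`, a decision is optimal among
fractional ones as soon as its pool-to-site flow maximises both the covered demand
`∑ min (S j) (t j)` and the total flow `∑ S j`, and its shortfall is exactly `(r - S)⁺`.

The covered demand of any fractional flow is at most the capacity of every cut
`∑_{j ∉ Q} t j + ∑_{P i ∩ Q ≠ ∅} y i`, and an integral flow attains the minimal cut: by induction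
on `∑ t`, one can always pick an edge `(i₀, j₀)` that no minimal cut avoiding `j₀` crosses, so
that removing one unit of `y i₀` and `t j₀` lowers the minimal cut by at most one. Topping this
flow up along arbitrary edges saturates every pool that covers a site, which maximises `∑ S`
without decreasing the covered demand.
-/

open Finset

theorem Nat.exists_eq_add_single {α : Type*} [DecidableEq α] {f : α → ℕ} {a : α} (h : 0 < f a) :
    ∃ g, f = g + (Pi.single a 1 : α → ℕ) :=
  ⟨Function.update f a (f a - 1), funext fun b => by
    by_cases hb : b = a
    · subst hb
      simp only [Pi.add_apply, Function.update_self, Pi.single_eq_same]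
      omega
    · simp [hb]⟩

namespace PoolFlow

variable {ι κ M : Type*} (P : ι → Finset κ)

section Basic

variable [DecidableEq κ] [AddCommMonoid M]

def inflow [Fintype ι] (z : ι → κ → M) (j : κ) : M :=
  ∑ i ∈ univ.filter (fun i => j ∈ P i), z i j

def neighbors [Fintype ι] (Q : Finset κ) : Finset ι :=
  univ.filter fun i => ¬Disjoint (P i) Q

-- The cut of the network source → pools → sites → sink (arc capacities `Y`, `∞`, `t`) whose
-- sink side consists of the sites in `Q` and the pools that reach them.
def cutCapacity [Fintype ι] [Fintype κ] (Y : ι → M) (t : κ → M) (Q : Finset κ) : M :=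
  ∑ j ∈ Qᶜ, t j + ∑ i ∈ neighbors P Q, Y i

structure IsFlow [Preorder M] (Y : ι → M) (z : ι → κ → M) : Prop where
  nonneg : ∀ i j, 0 ≤ z i j
  support : ∀ i j, j ∉ P i → z i j = 0
  capacity : ∀ i, ∑ j ∈ P i, z i j ≤ Y i

def coverage [Fintype ι] [Fintype κ] [LinearOrder M] (t : κ → M) (z : ι → κ → M) : M :=
  ∑ j, min (inflow P z j) (t j)

variable [Fintype ι]

theorem sum_inflow (z : ι → κ → M) (Q : Finset κ) :
    ∑ j ∈ Q, inflow P z j = ∑ i, ∑ j ∈ P i ∩ Q, z i j := by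
  simp only [inflow, sum_filter]
  rw [sum_comm]
  refine sum_congr rfl fun i _ => ?_
  rw [← sum_filter, filter_mem_eq_inter, inter_comm]

theorem inflow_add (z₁ z₂ : ι → κ → M) (j : κ) :
    inflow P (z₁ + z₂) j = inflow P z₁ j + inflow P z₂ j :=
  sum_add_distrib

theorem inflow_single [DecidableEq ι] {i₀ : ι} {j₀ : κ} (h : j₀ ∈ P i₀) (a : M) :
    inflow P (Pi.single i₀ (Pi.single j₀ a)) = Pi.single j₀ a := by
  funext j
  by_cases hj : j = j₀
  · subst hj
    simp [inflow, Pi.single_apply, ite_apply, h]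
  · simp [inflow, Pi.single_apply, ite_apply, hj]

theorem neighbors_union [DecidableEq ι] (Q R : Finset κ) :
    neighbors P (Q ∪ R) = neighbors P Q ∪ neighbors P R := by
  ext i
  simp [neighbors, disjoint_union_right, imp_iff_not_or]

theorem neighbors_mono {Q R : Finset κ} (h : Q ⊆ R) : neighbors P Q ⊆ neighbors P R :=
  fun _ => by simpa [neighbors] using mt (Disjoint.mono_right h)

theorem mem_neighbors_singleton {i : ι} {j : κ} : i ∈ neighbors P {j} ↔ j ∈ P i := by
  simp [neighbors]

variable [Fintype κ]

theorem cutCapacity_add (Y₁ Y₂ : ι → M) (t₁ t₂ : κ → M) (Q : Finset κ) :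
    cutCapacity P (Y₁ + Y₂) (t₁ + t₂) Q = cutCapacity P Y₁ t₁ Q + cutCapacity P Y₂ t₂ Q := by
  simp only [cutCapacity, Pi.add_apply, sum_add_distrib]
  abel

theorem cutCapacity_single [DecidableEq ι] (i₀ : ι) (j₀ : κ) (a : M) (Q : Finset κ) :
    cutCapacity P (Pi.single i₀ a) (Pi.single j₀ a) Q =
      (if j₀ ∈ Q then 0 else a) + if i₀ ∈ neighbors P Q then a else 0 := by
  simp [cutCapacity, sum_pi_single']

end Basic

section Ordered

variable [AddCommMonoid M] [PartialOrder M] {P}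

theorem isFlow_zero {Y : ι → M} (hY : ∀ i, 0 ≤ Y i) :
    IsFlow P Y 0 :=
  ⟨fun _ _ => le_rfl, fun _ _ _ => rfl, fun i => by simpa using hY i⟩

theorem isFlow_single [DecidableEq ι] [DecidableEq κ] {i₀ : ι} {j₀ : κ} (h : j₀ ∈ P i₀) {a : M}
    (ha : 0 ≤ a) :
    IsFlow P (Pi.single i₀ a) (Pi.single i₀ (Pi.single j₀ a)) where
  nonneg i j := by
    simp only [Pi.single_apply, ite_apply]
    split_ifs <;> simp [ha]
  support i j hj := by
    by_cases hi : i = i₀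
    · subst hi
      simp [show j ≠ j₀ from fun hj' => hj (hj' ▸ h)]
    · simp [hi]
  capacity i := by
    by_cases hi : i = i₀
    · subst hi
      simp [sum_pi_single', h]
    · simp [hi]

variable [IsOrderedAddMonoid M]

theorem IsFlow.add {Y₁ Y₂ : ι → M} {z₁ z₂ : ι → κ → M} (h₁ : IsFlow P Y₁ z₁) (h₂ : IsFlow P Y₂ z₂) :
    IsFlow P (Y₁ + Y₂) (z₁ + z₂) where
  nonneg i j := add_nonneg (h₁.nonneg i j) (h₂.nonneg i j)
  support i j hj := by simp [h₁.support i j hj, h₂.support i j hj]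
  capacity i := by
    simpa only [Pi.add_apply, sum_add_distrib] using add_le_add (h₁.capacity i) (h₂.capacity i)

theorem IsFlow.sum_inflow_le [Fintype ι] [DecidableEq κ] {Y : ι → M} {z : ι → κ → M}
    (hz : IsFlow P Y z) (Q : Finset κ) : ∑ j ∈ Q, inflow P z j ≤ ∑ i ∈ neighbors P Q, Y i := by
  rw [sum_inflow, neighbors, sum_filter]
  refine sum_le_sum fun i _ => ?_
  split_ifs with h
  · rw [disjoint_iff_inter_eq_empty.1 h, sum_empty]
  · exact (sum_le_sum_of_subset_of_nonneg inter_subset_left fun j _ _ => hz.nonneg i j).trans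
      (hz.capacity i)

end Ordered

section LinearOrdered

variable [Fintype ι] [Fintype κ] [DecidableEq κ] [AddCommMonoid M] [LinearOrder M]
  [IsOrderedAddMonoid M] {P}

theorem IsFlow.coverage_le_cutCapacity {Y : ι → M} {z : ι → κ → M} (hz : IsFlow P Y z)
    (t : κ → M) (Q : Finset κ) : coverage P t z ≤ cutCapacity P Y t Q := by
  rw [coverage, ← sum_add_sum_compl Q, cutCapacity, add_comm]
  exact add_le_add (sum_le_sum fun j _ => min_le_right _ _)
    ((sum_le_sum fun j _ => min_le_left _ _).trans (hz.sum_inflow_le Q))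

theorem coverage_mono (t : κ → M) {z z' : ι → κ → M} (h : z ≤ z') :
    coverage P t z ≤ coverage P t z' :=
  sum_le_sum fun j _ => min_le_min_right _ (sum_le_sum fun i _ => h i j)

theorem coverage_add_single [DecidableEq ι] {i₀ : ι} {j₀ : κ} (h : j₀ ∈ P i₀) (t : κ → M)
    (z : ι → κ → M) (a : M) :
    coverage P (t + Pi.single j₀ a) (z + Pi.single i₀ (Pi.single j₀ a)) = coverage P t z + a := by
  simp only [coverage, inflow_add, inflow_single P h, Pi.add_apply, min_add_add_right,
    sum_add_distrib, sum_pi_single', if_pos (mem_univ _)]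

end LinearOrdered

section MinCut

variable [Fintype ι] [Fintype κ] [DecidableEq κ]

def IsMinCut (Y : ι → ℕ) (t : κ → ℕ) (Q : Finset κ) : Prop :=
  ∀ R, cutCapacity P Y t Q ≤ cutCapacity P Y t R

variable {P} {Y : ι → ℕ} {t : κ → ℕ}

theorem exists_isMinCut (P : ι → Finset κ) (Y : ι → ℕ) (t : κ → ℕ) : ∃ Q, IsMinCut P Y t Q :=
  let ⟨Q, _, hQ⟩ := exists_min_image univ (cutCapacity P Y t) univ_nonempty
  ⟨Q, fun R => hQ R (mem_univ R)⟩

theorem exists_edge_of_forall_cutCapacity_pos (h : ∀ Q, 0 < cutCapacity P Y t Q) :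
    ∃ i j, j ∈ P i ∧ 0 < Y i ∧ 0 < t j := by
  by_contra! h'
  refine (h (univ.filter fun j => 0 < t j)).ne' ?_
  simp only [cutCapacity, add_eq_zero, sum_eq_zero_iff, mem_compl, mem_filter, mem_univ,
    true_and, not_lt, nonpos_iff_eq_zero, imp_self, implies_true, true_and]
  intro i hi
  obtain ⟨j, hjP, hjQ⟩ := not_disjoint_iff.1 (mem_filter.1 hi).2
  by_contra hY
  exact (h' i j hjP (Nat.pos_of_ne_zero hY)).not_gt (mem_filter.1 hjQ).2

variable [DecidableEq ι]

theorem cutCapacity_union_add_inter_le (Q R : Finset κ) :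
    cutCapacity P Y t (Q ∪ R) + cutCapacity P Y t (Q ∩ R) ≤
      cutCapacity P Y t Q + cutCapacity P Y t R := by
  have ht : ∑ j ∈ (Q ∪ R)ᶜ, t j + ∑ j ∈ (Q ∩ R)ᶜ, t j = ∑ j ∈ Qᶜ, t j + ∑ j ∈ Rᶜ, t j := by
    rw [compl_union, compl_inter, add_comm, sum_union_inter]
  have hY : ∑ i ∈ neighbors P (Q ∪ R), Y i + ∑ i ∈ neighbors P (Q ∩ R), Y i ≤
      ∑ i ∈ neighbors P Q, Y i + ∑ i ∈ neighbors P R, Y i := by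
    calc _ ≤ ∑ i ∈ neighbors P Q ∪ neighbors P R, Y i +
          ∑ i ∈ neighbors P Q ∩ neighbors P R, Y i := by
          rw [neighbors_union]
          exact Nat.add_le_add_left (sum_le_sum_of_subset (f := Y) (subset_inter
            (neighbors_mono P inter_subset_left) (neighbors_mono P inter_subset_right))) _
      _ = _ := sum_union_inter
  simp only [cutCapacity]
  omega

theorem IsMinCut.union {Q R : Finset κ} (hQ : IsMinCut P Y t Q) (hR : IsMinCut P Y t R) :
    IsMinCut P Y t (Q ∪ R) := fun S => by
  have := cutCapacity_union_add_inter_le (P := P) (Y := Y) (t := t) Q R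
  have := hQ (Q ∩ R)
  have := hR S
  omega

theorem exists_maximal_isMinCut_notMem {j₀ : κ} (h : ∃ Q, IsMinCut P Y t Q ∧ j₀ ∉ Q) :
    ∃ U, IsMinCut P Y t U ∧ j₀ ∉ U ∧ ∀ Q, IsMinCut P Y t Q → j₀ ∉ Q → Q ⊆ U := by
  classical
  obtain ⟨U, hU, hmax⟩ := exists_max_image (univ.filter fun Q => IsMinCut P Y t Q ∧ j₀ ∉ Q)
    card (by obtain ⟨Q, hQ⟩ := h; exact ⟨Q, by simpa using hQ⟩)
  simp only [mem_filter, mem_univ, true_and] at hU hmax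
  refine ⟨U, hU.1, hU.2, fun Q hQ hj => ?_⟩
  have hQU := eq_of_subset_of_card_le subset_union_right
    (hmax _ ⟨hQ.union hU.1, by simp [hj, hU.2]⟩)
  exact union_eq_right.1 hQU.symm

theorem cutCapacity_insert_add {j₀ : κ} {U : Finset κ} (hj : j₀ ∉ U) :
    cutCapacity P Y t (insert j₀ U) + t j₀ =
      cutCapacity P Y t U + ∑ i ∈ neighbors P {j₀} \ neighbors P U, Y i := by
  have ht : ∑ j ∈ (insert j₀ U)ᶜ, t j + t j₀ = ∑ j ∈ Uᶜ, t j := by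
    rw [compl_insert, sum_erase_add _ _ (mem_compl.2 hj)]
  have hY : ∑ i ∈ neighbors P (insert j₀ U), Y i =
      ∑ i ∈ neighbors P {j₀} \ neighbors P U, Y i + ∑ i ∈ neighbors P U, Y i := by
    rw [insert_eq, neighbors_union, ← union_sdiff_right, sum_sdiff subset_union_right]
  simp only [cutCapacity]
  omega

theorem IsMinCut.exists_disjoint {j₀ : κ} {U : Finset κ} (hU : IsMinCut P Y t U) (hj : j₀ ∉ U)
    (ht : 0 < t j₀) : ∃ i, j₀ ∈ P i ∧ 0 < Y i ∧ Disjoint (P i) U := by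
  have := cutCapacity_insert_add (P := P) (Y := Y) (t := t) hj
  have := hU (insert j₀ U)
  obtain ⟨i, hi, hYi⟩ := exists_ne_zero_of_sum_ne_zero
    (s := neighbors P {j₀} \ neighbors P U) (f := Y) (by omega)
  rw [mem_sdiff, mem_neighbors_singleton] at hi
  simp only [neighbors, mem_filter, mem_univ, true_and, not_not] at hi
  exact ⟨i, hi.1, Nat.pos_of_ne_zero hYi, hi.2⟩

theorem exists_edge_avoiding_isMinCut (h : ∀ Q, 0 < cutCapacity P Y t Q) :
    ∃ i₀ j₀, j₀ ∈ P i₀ ∧ 0 < Y i₀ ∧ 0 < t j₀ ∧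
      ∀ Q, IsMinCut P Y t Q → j₀ ∉ Q → Disjoint (P i₀) Q := by
  obtain ⟨i₁, j₀, hj₁, hY₁, ht₀⟩ := exists_edge_of_forall_cutCapacity_pos h
  by_cases hQ : ∃ Q, IsMinCut P Y t Q ∧ j₀ ∉ Q
  · obtain ⟨U, hU, hjU, hmax⟩ := exists_maximal_isMinCut_notMem hQ
    obtain ⟨i₀, hj₀, hY₀, hdisj⟩ := hU.exists_disjoint hjU ht₀
    exact ⟨i₀, j₀, hj₀, hY₀, ht₀, fun Q hQ hj => hdisj.mono_right (hmax Q hQ hj)⟩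
  · simp only [not_exists, not_and, not_not] at hQ
    exact ⟨i₁, j₀, hj₁, hY₁, ht₀, fun Q hQ' hj => absurd (hQ Q hQ') hj⟩

theorem IsMinCut.le_cutCapacity_add_one {i₀ : ι} {j₀ : κ} {Q₀ : Finset κ}
    (hQ₀ : IsMinCut P (Y + Pi.single i₀ 1) (t + Pi.single j₀ 1) Q₀)
    (hgood : ∀ Q, IsMinCut P (Y + Pi.single i₀ 1) (t + Pi.single j₀ 1) Q → j₀ ∉ Q →
      Disjoint (P i₀) Q) (Q : Finset κ) :
    cutCapacity P (Y + Pi.single i₀ 1) (t + Pi.single j₀ 1) Q₀ ≤ cutCapacity P Y t Q + 1 := by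
  -- The extra unit counts twice only in a cut avoiding `j₀` that reaches `i₀`, never minimal.
  have hQ := cutCapacity_add P Y (Pi.single i₀ 1) t (Pi.single j₀ 1) Q
  rw [cutCapacity_single] at hQ
  have := hQ₀ Q
  by_cases hcut : j₀ ∉ Q ∧ i₀ ∈ neighbors P Q
  · have hnot : ¬IsMinCut P (Y + Pi.single i₀ 1) (t + Pi.single j₀ 1) Q := fun hmin =>
      (mem_filter.1 hcut.2).2 (hgood Q hmin hcut.1)
    obtain ⟨R, hR⟩ := not_forall.1 hnot
    have := hQ₀ R
    rw [if_neg hcut.1, if_pos hcut.2] at hQ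
    omega
  · have : (if j₀ ∈ Q then 0 else 1) + (if i₀ ∈ neighbors P Q then 1 else 0) ≤ 1 := by
      split_ifs <;> simp_all
    omega

theorem exists_isFlow_cutCapacity_le_coverage (P : ι → Finset κ) (Y : ι → ℕ) (t : κ → ℕ) :
    ∃ z, IsFlow P Y z ∧ ∃ Q, cutCapacity P Y t Q ≤ coverage P t z := by
  induction h : ∑ j, t j using Nat.strong_induction_on generalizing Y t with
  | _ n ih =>
  obtain ⟨Q₀, hQ₀⟩ := exists_isMinCut P Y t
  by_cases h0 : cutCapacity P Y t Q₀ = 0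
  · exact ⟨0, isFlow_zero fun i => Nat.zero_le (Y i), Q₀, h0.trans_le (Nat.zero_le _)⟩
  obtain ⟨i₀, j₀, hj₀, hY₀, ht₀, hgood⟩ :=
    exists_edge_avoiding_isMinCut fun Q => (Nat.pos_of_ne_zero h0).trans_le (hQ₀ Q)
  obtain ⟨Y, rfl⟩ := Nat.exists_eq_add_single hY₀
  obtain ⟨t, rfl⟩ := Nat.exists_eq_add_single ht₀
  have hn : ∑ j, t j < n := by simp [← h, sum_add_distrib]
  obtain ⟨z, hz, Q, hQ⟩ := ih _ hn Y t rfl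
  refine ⟨z + Pi.single i₀ (Pi.single j₀ 1), hz.add (isFlow_single hj₀ zero_le_one), Q₀, ?_⟩
  rw [coverage_add_single hj₀]
  exact (hQ₀.le_cutCapacity_add_one hgood Q).trans (Nat.add_le_add_right hQ 1)

end MinCut

section Integrality

variable [Fintype ι] [DecidableEq κ] {K : Type*}

theorem inflow_natCast [AddCommMonoidWithOne K] (z : ι → κ → ℕ) (j : κ) :
    inflow P (fun i j => (z i j : K)) j = inflow P z j := by
  simp [inflow]

variable [Fintype κ]

theorem cutCapacity_natCast [AddCommMonoidWithOne K] (Y : ι → ℕ) (t : κ → ℕ) (Q : Finset κ) :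
    cutCapacity P (fun i => (Y i : K)) (fun j => (t j : K)) Q = cutCapacity P Y t Q := by
  simp [cutCapacity]

theorem coverage_natCast [Semiring K] [LinearOrder K] [IsStrictOrderedRing K] (t : κ → ℕ)
    (z : ι → κ → ℕ) :
    coverage P (fun j => (t j : K)) (fun i j => (z i j : K)) = coverage P t z := by
  simp [coverage, inflow_natCast, Nat.cast_min]

theorem IsFlow.exists_saturated {Y : ι → ℕ} {z : ι → κ → ℕ} (hz : IsFlow P Y z) :
    ∃ z', z ≤ z' ∧ IsFlow P Y z' ∧ ∑ j, inflow P z' j = ∑ i ∈ neighbors P univ, Y i := by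
  let slack : ι → κ → ℕ := fun i =>
    if h : (P i).Nonempty then Pi.single h.choose (Y i - ∑ j ∈ P i, z i j) else 0
  have hrow : ∀ i, ∑ j ∈ P i, (z + slack) i j = if (P i).Nonempty then Y i else 0 := by
    intro i
    have := hz.capacity i
    by_cases h : (P i).Nonempty
    · simp only [Pi.add_apply, sum_add_distrib, slack, dif_pos h, if_pos h, sum_pi_single',
        if_pos h.choose_spec]
      omega
    · simp [not_nonempty_iff_eq_empty.1 h]
  refine ⟨z + slack, fun i j => Nat.le_add_right _ _, ⟨fun _ _ => Nat.zero_le _, ?_, ?_⟩, ?_⟩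
  · intro i j hj
    by_cases h : (P i).Nonempty
    · simp [slack, dif_pos h, hz.support i j hj,
        show j ≠ h.choose from fun hj' => hj (hj' ▸ h.choose_spec)]
    · simp [slack, dif_neg h, hz.support i j hj]
  · intro i
    rw [hrow]
    split_ifs <;> simp
  · rw [sum_inflow]
    simp only [inter_univ, hrow, neighbors, sum_filter]
    refine sum_congr rfl fun i _ => ?_
    simp [disjoint_iff_inter_eq_empty, nonempty_iff_ne_empty]

theorem exists_isFlow_forall_coverage_le [DecidableEq ι] [Semiring K] [LinearOrder K]
    [IsStrictOrderedRing K] (P : ι → Finset κ) (Y : ι → ℕ) (t : κ → ℕ) :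
    ∃ z : ι → κ → ℕ, IsFlow P Y z ∧ ∀ z' : ι → κ → K, IsFlow P (fun i => (Y i : K)) z' →
      coverage P (fun j => (t j : K)) z' ≤ coverage P t z ∧
        ∑ j, inflow P z' j ≤ ∑ j, inflow P z j := by
  obtain ⟨z₀, hz₀, Q, hQ⟩ := exists_isFlow_cutCapacity_le_coverage P Y t
  obtain ⟨z, hz₀z, hz, hsat⟩ := hz₀.exists_saturated
  refine ⟨z, hz, fun z' hz' => ⟨?_, ?_⟩⟩
  · calc coverage P _ z'
        ≤ cutCapacity P (fun i => (Y i : K)) (fun j => (t j : K)) Q :=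
          hz'.coverage_le_cutCapacity _ Q
      _ = cutCapacity P Y t Q := cutCapacity_natCast P Y t Q
      _ ≤ coverage P t z := by exact_mod_cast hQ.trans (coverage_mono t hz₀z)
  · calc ∑ j, inflow P z' j ≤ ∑ i ∈ neighbors P univ, (Y i : K) := hz'.sum_inflow_le univ
      _ = _ := by rw [hsat, Nat.cast_sum]

end Integrality

section Cost

variable [Fintype ι] [DecidableEq κ] {K : Type*} [CommRing K]

def recourseCost [Fintype κ] (cx ce : K) (x e : κ → K) : K :=
  ∑ j, (cx * x j - ce * e j)

structure IsRecourse [PartialOrder K] (y : ι → K) (r : κ → K) (z : ι → κ → K) (x e : κ → K) :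
    Prop where
  isFlow : IsFlow P y z
  shortfall_nonneg : ∀ j, 0 ≤ x j
  excess_nonneg : ∀ j, 0 ≤ e j
  balance : ∀ j, inflow P z j + x j - e j = r j

variable {P}

theorem recourseCost_eq [Fintype κ] {r : κ → K} {z : ι → κ → K} {x e : κ → K}
    (h : ∀ j, inflow P z j + x j - e j = r j) (cx ce : K) :
    recourseCost cx ce x e = (cx - ce) * ∑ j, x j - ce * ∑ j, inflow P z j + ce * ∑ j, r j := by
  simp only [recourseCost, mul_sum, ← sum_sub_distrib, ← sum_add_distrib]
  refine sum_congr rfl fun j _ => ?_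
  rw [← h j]
  ring

variable [LinearOrder K] [IsStrictOrderedRing K]

theorem IsRecourse.max_sub_min_le_shortfall {y : ι → K} {r : κ → K} {z : ι → κ → K}
    {x e : κ → K} (h : IsRecourse P y r z x e) (j : κ) :
    max (r j) 0 - min (inflow P z j) (max (r j) 0) ≤ x j := by
  have hS : 0 ≤ inflow P z j := sum_nonneg fun i _ => h.isFlow.nonneg i j
  have := h.balance j
  have := h.shortfall_nonneg j
  have := h.excess_nonneg j
  simp only [max_def, min_def]
  split_ifs <;> linarith

theorem IsRecourse.recourseCost_le [Fintype κ] {cx ce : K} (hce : 0 ≤ ce) (hcx : ce ≤ cx)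
    {y : ι → K} {r : κ → K} {z₁ z₂ : ι → κ → K} {x₁ e₁ x₂ e₂ : κ → K}
    (h₁ : IsRecourse P y r z₁ x₁ e₁) (h₂ : IsRecourse P y r z₂ x₂ e₂)
    (hx₁ : ∀ j, x₁ j = max (r j) 0 - min (inflow P z₁ j) (max (r j) 0))
    (hcov : coverage P (fun j => max (r j) 0) z₂ ≤ coverage P (fun j => max (r j) 0) z₁)
    (hin : ∑ j, inflow P z₂ j ≤ ∑ j, inflow P z₁ j) :
    recourseCost cx ce x₁ e₁ ≤ recourseCost cx ce x₂ e₂ := by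
  have hx : ∑ j, x₁ j ≤ ∑ j, x₂ j := by
    have h₂x := sum_le_sum fun j (_ : j ∈ univ) => h₂.max_sub_min_le_shortfall j
    simp only [hx₁, sum_sub_distrib] at h₂x ⊢
    exact (sub_le_sub_left hcov _).trans h₂x
  rw [recourseCost_eq h₁.balance, recourseCost_eq h₂.balance]
  linarith [mul_le_mul_of_nonneg_left hx (sub_nonneg.2 hcx), mul_le_mul_of_nonneg_left hin hce]

theorem IsRecourse.of_nat {y : ι → ℤ} {r : κ → ℤ} {z : ι → κ → ℕ} {x e : κ → ℕ}
    (hs : ∀ i j, j ∉ P i → z i j = 0)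
    (hbal : ∀ j, inflow P (fun i j => (z i j : ℤ)) j + x j - e j = r j)
    (hcap : ∀ i, ∑ j ∈ P i, (z i j : ℤ) ≤ y i) :
    IsRecourse P (fun i => (y i : K)) (fun j => (r j : K)) (fun i j => (z i j : K))
      (fun j => (x j : K)) (fun j => (e j : K)) where
  isFlow :=
    { nonneg := fun _ _ => Nat.cast_nonneg _
      support := fun i j hj => by simp [hs i j hj]
      capacity := fun i => by exact_mod_cast Int.cast_le.2 (hcap i) }
  shortfall_nonneg _ := Nat.cast_nonneg _
  excess_nonneg _ := Nat.cast_nonneg _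
  balance j := by
    have := congrArg (Int.cast : ℤ → K) (hbal j)
    push_cast [inflow] at this ⊢
    exact this

theorem exists_nat_forall_recourseCost_le [Fintype κ] [DecidableEq ι] {cx ce : K} (hce : 0 ≤ ce)
    (hcx : ce ≤ cx) {y : ι → ℤ} (hy : ∀ i, 0 ≤ y i) (r : κ → ℤ) :
    ∃ (z : ι → κ → ℕ) (x e : κ → ℕ), (∀ i j, j ∉ P i → z i j = 0) ∧
      (∀ j, inflow P (fun i j => (z i j : ℤ)) j + x j - e j = r j) ∧
      (∀ i, ∑ j ∈ P i, (z i j : ℤ) ≤ y i) ∧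
      ∀ z' x' e', IsRecourse P (fun i => (y i : K)) (fun j => (r j : K)) z' x' e' →
        recourseCost cx ce (fun j => (x j : K)) (fun j => (e j : K)) ≤
          recourseCost cx ce x' e' := by
  obtain ⟨z, hz, hmax⟩ :=
    exists_isFlow_forall_coverage_le (K := K) P (fun i => (y i).toNat) (fun j => (r j).toNat)
  have hyK : ∀ i, ((y i).toNat : K) = y i := fun i => by
    rw [← Int.cast_natCast, Int.toNat_of_nonneg (hy i)]
  have hrK : ∀ j, ((r j).toNat : K) = max (r j : K) 0 := fun j => by
    rw [← Int.cast_natCast, Int.toNat_eq_max, Int.cast_max, Int.cast_zero]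
  have hbal : ∀ j, inflow P (fun i j => (z i j : ℤ)) j + ((r j - inflow P z j).toNat : ℕ)
      - ((inflow P z j - r j).toNat : ℕ) = r j := fun j => by
    rw [inflow_natCast]
    omega
  have hcap : ∀ i, ∑ j ∈ P i, (z i j : ℤ) ≤ y i := fun i => by
    have hi := hz.capacity i
    zify at hi
    rwa [Int.toNat_of_nonneg (hy i)] at hi
  refine ⟨z, _, _, hz.support, hbal, hcap, fun z' x' e' h' => ?_⟩
  obtain ⟨hcov, hin⟩ := hmax z' (by simpa only [hyK] using h'.isFlow)
  refine (IsRecourse.of_nat hz.support hbal hcap).recourseCost_le hce hcx h' (fun j => ?_)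
    (by simpa only [hrK, ← coverage_natCast (K := K)] using hcov)
    (by simpa only [inflow_natCast, Nat.cast_sum] using hin)
  have hx : (((r j - inflow P z j).toNat : ℕ) : ℤ) =
      max (r j) 0 - min ((inflow P z j : ℕ) : ℤ) (max (r j) 0) := by omega
  have := congrArg (Int.cast : ℤ → K) hx
  push_cast at this
  rw [inflow_natCast, this]

end Cost

end PoolFlow

open PoolFlow

/-- the recourse cost `V(w̃, ỹ, d̃)` is unchanged if the integrality
restrictions on the second-stage variables `z, x, e` are relaxed to nonnegativity. -/
theorem recourse_integrality_relaxation
    (I J : ℕ) (P : Fin I → Finset (Fin J))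
    (cx ce : ℝ) (hce : 0 ≤ ce) (hcx : ce < cx)
    (d w : Fin J → ℤ) (y : Fin I → ℤ) (hy : ∀ i, 0 ≤ y i) :
    sInf {v : ℝ | ∃ (z : Fin I → Fin J → ℕ) (x e : Fin J → ℕ),
        (∀ i j, j ∉ P i → z i j = 0) ∧
        (∀ j : Fin J,
          (∑ i ∈ Finset.univ.filter (fun i => j ∈ P i), (z i j : ℤ))
            + (x j : ℤ) - (e j : ℤ) = d j - w j) ∧
        (∀ i : Fin I, (∑ j ∈ P i, (z i j : ℤ)) ≤ y i) ∧
        v = ∑ j, (cx * (x j : ℝ) - ce * (e j : ℝ))}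
    = sInf {v : ℝ | ∃ (z : Fin I → Fin J → ℝ) (x e : Fin J → ℝ),
        (∀ i j, 0 ≤ z i j) ∧ (∀ j, 0 ≤ x j) ∧ (∀ j, 0 ≤ e j) ∧
        (∀ i j, j ∉ P i → z i j = 0) ∧
        (∀ j : Fin J,
          (∑ i ∈ Finset.univ.filter (fun i => j ∈ P i), z i j)
            + x j - e j = (d j : ℝ) - (w j : ℝ)) ∧
        (∀ i : Fin I, (∑ j ∈ P i, z i j) ≤ (y i : ℝ)) ∧
        v = ∑ j, (cx * x j - ce * e j)} := by
  obtain ⟨z, x, e, hs, hbal, hcap, hopt⟩ :=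
    exists_nat_forall_recourseCost_le (K := ℝ) (P := P) hce hcx.le hy (fun j => d j - w j)
  simp only [Int.cast_sub] at hopt
  have hrec := IsRecourse.of_nat (K := ℝ) hs hbal hcap
  simp only [Int.cast_sub] at hrec
  refine Eq.trans (IsLeast.csInf_eq ⟨⟨z, x, e, hs, hbal, hcap, rfl⟩, ?_⟩)
    (Eq.symm (IsLeast.csInf_eq ⟨⟨_, _, _, hrec.isFlow.nonneg, hrec.shortfall_nonneg,
      hrec.excess_nonneg, hrec.isFlow.support, hrec.balance, hrec.isFlow.capacity, rfl⟩, ?_⟩))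
  · rintro v ⟨z', x', e', hs', hbal', hcap', rfl⟩
    have hrec' := IsRecourse.of_nat (K := ℝ) hs' hbal' hcap'
    simp only [Int.cast_sub] at hrec'
    exact hopt _ _ _ hrec'
  · rintro v ⟨z', x', e', hz, hx, he, hs', hbal', hcap', rfl⟩
    exact hopt z' x' e' ⟨⟨hz, hs', hcap'⟩, hx, he, hbal'⟩
end

section
/- Let H̄ ⊆ ℝ^{12} be the polyhedron defined by: all variables t_1,t_2,t_3,s_{11},s_{22},s_{33},r_1,r_2,r_3,p_1,p_2,p_3 ≥ 0; s_{11} ≤ t_1 ≤ s_{11} + t_2 ≤ 1; s_{22} ≤ t_2 ≤ s_{22} + t_3 ≤ 1; s_{33} ≤ t_3 ≤ s_{33} + t_1 ≤ 1; t_j + r_j = 1 for j = 1,2,3; and p_1 + s_{11} + t_2 = p_2 + s_{22} + t_3 = p_3 + s_{33} + t_1 = 1. Then the point with t_j = s_{jj} = r_j = 1/2 and p_j = 0 for all j is an extreme point of H̄; in particular H̄ is not an integral polytope. -/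
/-!
At the half point the inequalities `p_j ≥ 0` and `s_{jj} ≤ t_j` are tight. At a point of `H̄`
where they are tight, the flow equations become `t_j + t_{j+1} = 1` around the cycle of pools;
as the cycle has odd length this forces `t_j = 1/2`, and the other coordinates follow. So the
half point is the only common zero in `H̄` of finitely many linear functionals that are
nonnegative on `H̄`, hence extreme.
-/

theorem mem_extremePoints_of_nonneg_of_unique_zero {𝕜 E ι : Type*} [Ring 𝕜] [LinearOrder 𝕜]
    [IsStrictOrderedRing 𝕜] [AddCommGroup E] [Module 𝕜 E] {A : Set E} {x : E}
    (ℓ : ι → E →ₗ[𝕜] 𝕜) (hx : x ∈ A) (hnonneg : ∀ i, ∀ y ∈ A, 0 ≤ ℓ i y)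
    (hzero : ∀ i, ℓ i x = 0) (hunique : ∀ y ∈ A, (∀ i, ℓ i y = 0) → y = x) :
    x ∈ A.extremePoints 𝕜 := by
  refine mem_extremePoints.2 ⟨hx, fun y hy z hz ⟨a, b, ha, hb, _, hxyz⟩ => ?_⟩
  have hyz : ∀ i, ℓ i y = 0 ∧ ℓ i z = 0 := fun i => by
    have h : a * ℓ i y + b * ℓ i z = 0 := by
      rw [← hzero i, ← hxyz, map_add, map_smul, map_smul, smul_eq_mul, smul_eq_mul]
    obtain ⟨hy0, hz0⟩ := (add_eq_zero_iff_of_nonneg (mul_nonneg ha.le (hnonneg i y hy))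
      (mul_nonneg hb.le (hnonneg i z hz))).1 h
    exact ⟨(mul_eq_zero.1 hy0).resolve_left ha.ne', (mul_eq_zero.1 hz0).resolve_left hb.ne'⟩
  exact ⟨hunique y hy fun i => (hyz i).1, hunique z hz fun i => (hyz i).2⟩

theorem Fin.apply_eq_half_of_forall_add_apply_add_one_eq {K : Type*} [Field K] [NeZero (2 : K)]
    {n : ℕ} [NeZero n] (hn : Odd n) {f : Fin n → K} {c : K} (h : ∀ j, f j + f (j + 1) = c)
    (j : Fin n) : f j = c / 2 := by
  open Fin.CommRing in
  have hperiod : ∀ k : ℕ, ∀ i : Fin n, f (i + 2 * k) = f i := by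
    intro k
    induction k with
    | zero => simp
    | succ k ih =>
      intro i
      rw [← ih i, Nat.cast_succ, show i + 2 * ((k : Fin n) + 1) = i + 2 * k + 1 + 1 by ring]
      linear_combination h (i + 2 * k + 1) - h (i + 2 * k)
  obtain ⟨m, hm⟩ := hn
  open Fin.CommRing in
  have hshift : f (j + 1) = f j := by
    have htwo_mul : 2 * ((m + 1 : ℕ) : Fin n) = 1 := calc
      2 * ((m + 1 : ℕ) : Fin n) = ((n + 1 : ℕ) : Fin n) := by
        rw [← Nat.cast_ofNat, ← Nat.cast_mul, show 2 * (m + 1) = n + 1 by omega]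
      _ = 1 := by rw [Nat.cast_succ, Fin.natCast_self, zero_add]
    simpa only [htwo_mul] using hperiod (m + 1) j
  rw [eq_div_iff two_ne_zero, mul_two]
  conv_lhs => rhs; rw [← hshift]
  exact h j

namespace ChainedPools

/-- `H̄` for `n` cyclically chained pools (pool `j` feeds pool `j + 1`), in coordinates
`x = (t, s, r, p)` where `s j` stands for `s_{jj}`. -/
def polyhedron (n : ℕ) [NeZero n] :
    Set ((Fin n → ℝ) × (Fin n → ℝ) × (Fin n → ℝ) × (Fin n → ℝ)) :=
  {x | (∀ j, 0 ≤ x.1 j) ∧ (∀ j, 0 ≤ x.2.1 j) ∧ (∀ j, 0 ≤ x.2.2.1 j) ∧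
    (∀ j, 0 ≤ x.2.2.2 j) ∧
    (∀ j : Fin n, x.2.1 j ≤ x.1 j) ∧
    (∀ j : Fin n, x.1 j ≤ x.2.1 j + x.1 (j + 1)) ∧
    (∀ j : Fin n, x.2.1 j + x.1 (j + 1) ≤ 1) ∧
    (∀ j : Fin n, x.1 j + x.2.2.1 j = 1) ∧
    (∀ j : Fin n, x.2.2.2 j + x.2.1 j + x.1 (j + 1) = 1)}

noncomputable def halfPoint (n : ℕ) : (Fin n → ℝ) × (Fin n → ℝ) × (Fin n → ℝ) × (Fin n → ℝ) :=
  (fun _ => 1 / 2, fun _ => 1 / 2, fun _ => 1 / 2, fun _ => 0)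

variable {n : ℕ} [NeZero n]

theorem halfPoint_mem_polyhedron : halfPoint n ∈ polyhedron n := by
  refine ⟨fun _ => ?_, fun _ => ?_, fun _ => ?_, fun _ => ?_, fun _ => ?_, fun _ => ?_,
    fun _ => ?_, fun _ => ?_, fun _ => ?_⟩ <;> norm_num [halfPoint]

theorem eq_halfPoint_of_mem_polyhedron (hn : Odd n)
    {y : (Fin n → ℝ) × (Fin n → ℝ) × (Fin n → ℝ) × (Fin n → ℝ)} (hy : y ∈ polyhedron n)
    (hp : ∀ j, y.2.2.2 j = 0) (hs : ∀ j, y.1 j = y.2.1 j) : y = halfPoint n := by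
  obtain ⟨-, -, -, -, -, -, -, hr, hflow⟩ := hy
  have ht : ∀ j, y.1 j = 1 / 2 := Fin.apply_eq_half_of_forall_add_apply_add_one_eq hn fun j => by
    linarith [hflow j, hp j, hs j]
  refine Prod.ext (funext ht) (Prod.ext (funext fun j => ?_) (Prod.ext (funext fun j => ?_)
    (funext hp)))
  · rw [← hs, ht]; rfl
  · show y.2.2.1 j = 1 / 2
    linarith [hr j, ht j]

theorem halfPoint_mem_extremePoints (hn : Odd n) :
    halfPoint n ∈ (polyhedron n).extremePoints ℝ := by
  -- the functionals `p_j` and `t_j - s_{jj}`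
  refine mem_extremePoints_of_nonneg_of_unique_zero
    (Sum.elim (fun j => LinearMap.proj j ∘ₗ LinearMap.snd ℝ _ _ ∘ₗ LinearMap.snd ℝ _ _ ∘ₗ
        LinearMap.snd ℝ _ _)
      (fun j => LinearMap.proj j ∘ₗ
        (LinearMap.fst ℝ _ _ - LinearMap.fst ℝ _ _ ∘ₗ LinearMap.snd ℝ _ _)))
    halfPoint_mem_polyhedron ?_ ?_ ?_
  · rintro (j | j) y ⟨-, -, -, hp, hs, -⟩ <;> simp [hp j, hs j]
  · rintro (j | j) <;> simp [halfPoint]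
  · rintro y hy hy0
    exact eq_halfPoint_of_mem_polyhedron hn hy (fun j => by simpa using hy0 (.inl j))
      (fun j => by simpa [sub_eq_zero] using hy0 (.inr j))

end ChainedPools

/-- for three chained pools, the point with all `t_j = s_{jj} = r_j = 1/2`
and `p_j = 0` is a fractional extreme point of the relaxed polyhedron `H̄`; in
particular `H̄` is not an integral polytope. -/
theorem chained_pools_fractional_extreme_point :
    ((fun _ : Fin 3 => (1 / 2 : ℝ)), (fun _ : Fin 3 => (1 / 2 : ℝ)),
      (fun _ : Fin 3 => (1 / 2 : ℝ)), (fun _ : Fin 3 => (0 : ℝ))) ∈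
      Set.extremePoints ℝ
        {x : (Fin 3 → ℝ) × (Fin 3 → ℝ) × (Fin 3 → ℝ) × (Fin 3 → ℝ) |
          (∀ j, 0 ≤ x.1 j) ∧ (∀ j, 0 ≤ x.2.1 j) ∧ (∀ j, 0 ≤ x.2.2.1 j) ∧
          (∀ j, 0 ≤ x.2.2.2 j) ∧
          (∀ j : Fin 3, x.2.1 j ≤ x.1 j) ∧
          (∀ j : Fin 3, x.1 j ≤ x.2.1 j + x.1 (j + 1)) ∧
          (∀ j : Fin 3, x.2.1 j + x.1 (j + 1) ≤ 1) ∧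
          (∀ j : Fin 3, x.1 j + x.2.2.1 j = 1) ∧
          (∀ j : Fin 3, x.2.2.2 j + x.2.1 j + x.1 (j + 1) = 1)} ∧
    ¬ (∀ x ∈ Set.extremePoints ℝ
        {x : (Fin 3 → ℝ) × (Fin 3 → ℝ) × (Fin 3 → ℝ) × (Fin 3 → ℝ) |
          (∀ j, 0 ≤ x.1 j) ∧ (∀ j, 0 ≤ x.2.1 j) ∧ (∀ j, 0 ≤ x.2.2.1 j) ∧
          (∀ j, 0 ≤ x.2.2.2 j) ∧
          (∀ j : Fin 3, x.2.1 j ≤ x.1 j) ∧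
          (∀ j : Fin 3, x.1 j ≤ x.2.1 j + x.1 (j + 1)) ∧
          (∀ j : Fin 3, x.2.1 j + x.1 (j + 1) ≤ 1) ∧
          (∀ j : Fin 3, x.1 j + x.2.2.1 j = 1) ∧
          (∀ j : Fin 3, x.2.2.2 j + x.2.1 j + x.1 (j + 1) = 1)},
        ∀ j : Fin 3, (∃ n : ℤ, x.1 j = n) ∧ (∃ n : ℤ, x.2.1 j = n) ∧
          (∃ n : ℤ, x.2.2.1 j = n) ∧ (∃ n : ℤ, x.2.2.2 j = n)) := by
  have hext := ChainedPools.halfPoint_mem_extremePoints (n := 3) (by decide)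
  refine ⟨hext, fun hintegral => ?_⟩
  obtain ⟨k, hk⟩ := (hintegral _ hext 0).1
  have h2k : (2 : ℤ) * k = 1 := by
    exact_mod_cast (by rw [← hk]; norm_num [ChainedPools.halfPoint] : (2 : ℝ) * k = 1)
  omega
end

section
/- Fix reals c_t_j, c_r_j (j ∈ [J]), c_p_i (i ∈ [I]), where the sets P_1,…,P_I partition a subset of [J] into pairwise disjoint nonempty blocks. The maximum of Σ_{j} (c_t_j t_j + c_r_j r_j) + Σ_i c_p_i p_i over the set H defined by the constraints (for each i separately): Σ_{j ∈ P_i} s_{ij} ≤ 1; s_{ij} ≤ t_j; t_j + s_{iℓ} ≤ 1 for j, ℓ ∈ P_i with j > ℓ; t_j ≤ Σ_{ℓ ∈ P_i} s_{iℓ}; t_j, s_{ij} ∈ {0,1}; t_j + r_j = 1; p_i + Σ_{j ∈ P_i} s_{ij} = 1, equals Σ_{i=1}^I max{ c_p_i + Σ_{ℓ ∈ P_i} c_r_ℓ, max_{j ∈ P_i} { c_t_j + Σ_{ℓ ∈ P_i, ℓ < j} max{c_t_ℓ, c_r_ℓ} + Σ_{ℓ ∈ P_i, ℓ > j} c_r_ℓ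 } }. -/
/-!
Since the pools are disjoint, both the constraints and the objective split into one block per
pool, and per-pool optima glue to a global feasible point, so it suffices to solve one pool `S`.
A feasible point of a pool either has `s = 0`, which forces `t = 0`, `r = 1`, `p = 1` and the
value `cp + ∑ cr`, or has `s j₀ = 1` for exactly one `j₀ ∈ S`. In the second case `p = 0`,
`t j₀ = 1`, every later `t ℓ` vanishes and every earlier `t ℓ` is free, so the value is at most
`ct j₀ + ∑_{ℓ < j₀} max (ct ℓ) (cr ℓ) + ∑_{ℓ > j₀} cr ℓ`, with equality for the greedy choice
of the earlier `t ℓ`.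
-/

open Finset Function

lemma exists_eqOn_of_pairwise_disjoint {ι α β : Type*} [Nonempty β] {P : ι → Set α}
    (hP : Pairwise (Disjoint on P)) (f : ι → α → β) :
    ∃ g : α → β, ∀ i, ∀ a ∈ P i, g a = f i a := by
  classical
  refine ⟨fun a => if h : ∃ i, a ∈ P i then f h.choose a else Classical.arbitrary β, ?_⟩
  intro i a ha
  have hex : ∃ i, a ∈ P i := ⟨i, ha⟩
  have hi : hex.choose = i := by
    by_contra hne
    exact Set.disjoint_left.mp (hP hne) hex.choose_spec ha
  simp only [dif_pos hex, hi]

lemma sum_eq_sum_filter_lt_add_add_sum_filter_gt_s16 {α M : Type*} [LinearOrder α]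
    [AddCommMonoid M] {S : Finset α} {j₀ : α} (hj₀ : j₀ ∈ S) (g : α → M) :
    ∑ ℓ ∈ S, g ℓ =
      ∑ ℓ ∈ S.filter (· < j₀), g ℓ + g j₀ + ∑ ℓ ∈ S.filter (j₀ < ·), g ℓ := by
  have hge : S.filter (fun ℓ => ¬ ℓ < j₀) = insert j₀ (S.filter (j₀ < ·)) := by
    ext ℓ
    simp only [mem_filter, mem_insert, not_lt]
    constructor
    · rintro ⟨hℓ, hle⟩
      rcases hle.eq_or_lt with rfl | hlt
      exacts [Or.inl rfl, Or.inr ⟨hℓ, hlt⟩]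
    · rintro (rfl | ⟨hℓ, hlt⟩)
      exacts [⟨hj₀, le_rfl⟩, ⟨hℓ, hlt.le⟩]
  rw [← sum_filter_add_sum_filter_not S (· < j₀), hge, sum_insert (by simp), add_assoc]

lemma mul_add_mul_one_sub_le_max {a b x : ℝ} (hx : x = 0 ∨ x = 1) :
    a * x + b * (1 - x) ≤ max a b := by
  rcases hx with rfl | rfl <;> simp

section Objective

variable {α : Type*} {S : Finset α} {t r : α → ℝ} {p : ℝ} (ct cr : α → ℝ) (cp : ℝ)

def poolObjective (S : Finset α) (t r : α → ℝ) (p : ℝ) : ℝ :=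
  ∑ j ∈ S, (ct j * t j + cr j * r j) + cp * p

lemma poolObjective_congr {t' r' : α → ℝ} (ht : ∀ j ∈ S, t' j = t j)
    (hr : ∀ j ∈ S, r' j = r j) :
    poolObjective ct cr cp S t' r' p = poolObjective ct cr cp S t r p := by
  unfold poolObjective
  rw [sum_congr rfl fun j hj => by rw [ht j hj, hr j hj]]

lemma poolObjective_idle : poolObjective ct cr cp S 0 1 1 = cp + ∑ j ∈ S, cr j := by
  simp [poolObjective, add_comm]

end Objective

section SinglePool

variable {α : Type*} [LinearOrder α] {S : Finset α} {t r s : α → ℝ} {p : ℝ}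
  (ct cr : α → ℝ) (cp : ℝ)

structure PoolFeasible (S : Finset α) (t r s : α → ℝ) (p : ℝ) : Prop where
  t_binary : ∀ j ∈ S, t j = 0 ∨ t j = 1
  s_binary : ∀ j ∈ S, s j = 0 ∨ s j = 1
  sum_s_le_one : ∑ j ∈ S, s j ≤ 1
  s_le_t : ∀ j ∈ S, s j ≤ t j
  t_add_s_le_one : ∀ j ∈ S, ∀ ℓ ∈ S, ℓ < j → t j + s ℓ ≤ 1
  t_le_sum_s : ∀ j ∈ S, t j ≤ ∑ ℓ ∈ S, s ℓ
  t_add_r : ∀ j ∈ S, t j + r j = 1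
  p_add_sum_s : p + ∑ j ∈ S, s j = 1

def chainValue (S : Finset α) (j : α) : ℝ :=
  ct j + ∑ ℓ ∈ S.filter (· < j), max (ct ℓ) (cr ℓ) + ∑ ℓ ∈ S.filter (j < ·), cr ℓ

def poolOptimum (S : Finset α) (hS : S.Nonempty) : ℝ :=
  max (cp + ∑ ℓ ∈ S, cr ℓ) (S.sup' hS (chainValue ct cr S))

lemma PoolFeasible.congr {t' r' : α → ℝ} (h : PoolFeasible S t r s p)
    (ht : ∀ j ∈ S, t' j = t j) (hr : ∀ j ∈ S, r' j = r j) : PoolFeasible S t' r' s p where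
  t_binary j hj := ht j hj ▸ h.t_binary j hj
  s_binary := h.s_binary
  sum_s_le_one := h.sum_s_le_one
  s_le_t j hj := ht j hj ▸ h.s_le_t j hj
  t_add_s_le_one j hj := ht j hj ▸ h.t_add_s_le_one j hj
  t_le_sum_s j hj := ht j hj ▸ h.t_le_sum_s j hj
  t_add_r j hj := ht j hj ▸ hr j hj ▸ h.t_add_r j hj
  p_add_sum_s := h.p_add_sum_s

lemma PoolFeasible.r_eq (h : PoolFeasible S t r s p) {j : α} (hj : j ∈ S) : r j = 1 - t j := by
  linarith [h.t_add_r j hj]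

lemma PoolFeasible.objective_eq_of_forall_s_eq_zero (h : PoolFeasible S t r s p)
    (hs : ∀ j ∈ S, s j = 0) : poolObjective ct cr cp S t r p = cp + ∑ j ∈ S, cr j := by
  have hsum : ∑ j ∈ S, s j = 0 := sum_eq_zero hs
  have ht (j) (hj : j ∈ S) : t j = 0 :=
    (h.t_binary j hj).resolve_right fun h1 => by linarith [h.t_le_sum_s j hj]
  have hp : p = 1 := by linarith [h.p_add_sum_s]
  rw [poolObjective, sum_congr rfl fun j hj => by rw [h.r_eq hj, ht j hj], hp]
  simp only [mul_zero, sub_zero, mul_one, zero_add]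
  ring

lemma PoolFeasible.objective_le_chainValue (h : PoolFeasible S t r s p) {j₀ : α} (hj₀ : j₀ ∈ S)
    (hs : s j₀ = 1) : poolObjective ct cr cp S t r p ≤ chainValue ct cr S j₀ := by
  have hs_nonneg (j) (hj : j ∈ S) : 0 ≤ s j := by
    rcases h.s_binary j hj with h0 | h1 <;> simp [*]
  have hsum : ∑ j ∈ S, s j = 1 :=
    le_antisymm h.sum_s_le_one (hs ▸ single_le_sum hs_nonneg hj₀)
  have hp : p = 0 := by linarith [h.p_add_sum_s]
  have ht₀ : t j₀ = 1 :=
    (h.t_binary j₀ hj₀).resolve_left fun h0 => by linarith [h.s_le_t j₀ hj₀]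
  have ht_after (ℓ) (hℓ : ℓ ∈ S) (hlt : j₀ < ℓ) : t ℓ = 0 :=
    (h.t_binary ℓ hℓ).resolve_right fun h1 => by linarith [h.t_add_s_le_one ℓ hℓ j₀ hj₀ hlt]
  have hbefore : ∑ ℓ ∈ S.filter (· < j₀), (ct ℓ * t ℓ + cr ℓ * r ℓ) ≤
      ∑ ℓ ∈ S.filter (· < j₀), max (ct ℓ) (cr ℓ) := by
    refine sum_le_sum fun ℓ hℓ => ?_
    have hℓS := (mem_filter.mp hℓ).1
    rw [h.r_eq hℓS]
    exact mul_add_mul_one_sub_le_max (h.t_binary ℓ hℓS)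
  have hafter : ∑ ℓ ∈ S.filter (j₀ < ·), (ct ℓ * t ℓ + cr ℓ * r ℓ) =
      ∑ ℓ ∈ S.filter (j₀ < ·), cr ℓ := by
    refine sum_congr rfl fun ℓ hℓ => ?_
    obtain ⟨hℓS, hlt⟩ := mem_filter.mp hℓ
    rw [h.r_eq hℓS, ht_after ℓ hℓS hlt]
    ring
  have hat : ct j₀ * t j₀ + cr j₀ * r j₀ = ct j₀ := by
    rw [h.r_eq hj₀, ht₀]
    ring
  rw [poolObjective, chainValue, sum_eq_sum_filter_lt_add_add_sum_filter_gt_s16 hj₀, hafter, hat, hp]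
  linarith

lemma PoolFeasible.objective_le_poolOptimum (h : PoolFeasible S t r s p) (hS : S.Nonempty) :
    poolObjective ct cr cp S t r p ≤ poolOptimum ct cr cp S hS := by
  by_cases hs : ∀ j ∈ S, s j = 0
  · exact (h.objective_eq_of_forall_s_eq_zero ct cr cp hs).trans_le (le_max_left _ _)
  · push Not at hs
    obtain ⟨j₀, hj₀, hs₀⟩ := hs
    calc poolObjective ct cr cp S t r p
        ≤ chainValue ct cr S j₀ :=
          h.objective_le_chainValue ct cr cp hj₀ ((h.s_binary j₀ hj₀).resolve_left hs₀)
      _ ≤ S.sup' hS (chainValue ct cr S) := le_sup' _ hj₀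
      _ ≤ poolOptimum ct cr cp S hS := le_max_right _ _

lemma poolFeasible_idle : PoolFeasible S 0 1 0 1 := by
  constructor <;> simp

noncomputable def greedyChain (j₀ ℓ : α) : ℝ :=
  if ℓ = j₀ ∨ (ℓ < j₀ ∧ cr ℓ ≤ ct ℓ) then 1 else 0

lemma poolFeasible_greedyChain {j₀ : α} (hj₀ : j₀ ∈ S) :
    PoolFeasible S (greedyChain ct cr j₀) (1 - greedyChain ct cr j₀) (Pi.single j₀ 1) 0 := by
  have hsum : ∑ j ∈ S, Pi.single j₀ (1 : ℝ) j = 1 := by simp [hj₀]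
  have hbin (ℓ : α) : greedyChain ct cr j₀ ℓ = 0 ∨ greedyChain ct cr j₀ ℓ = 1 := by
    unfold greedyChain; split_ifs <;> simp
  have hle (ℓ : α) : greedyChain ct cr j₀ ℓ ≤ 1 := by
    unfold greedyChain; split_ifs <;> norm_num
  have hnonneg (ℓ : α) : 0 ≤ greedyChain ct cr j₀ ℓ := by
    unfold greedyChain; split_ifs <;> norm_num
  constructor
  · exact fun ℓ _ => hbin ℓ
  · intro ℓ _
    by_cases h : ℓ = j₀ <;> simp [h]
  · exact hsum.le
  · intro ℓ _
    by_cases h : ℓ = j₀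
    · simp [h, greedyChain]
    · simp only [Pi.single_apply, h, if_false]
      exact hnonneg ℓ
  · intro j _ ℓ _ hlt
    by_cases h : ℓ = j₀
    · subst h
      simp [greedyChain, hlt.ne', not_lt_of_gt hlt]
    · simpa [h] using hle j
  · exact fun ℓ _ => hsum.symm ▸ hle ℓ
  · simp
  · simp [hsum]

lemma poolObjective_greedyChain {j₀ : α} (hj₀ : j₀ ∈ S) :
    poolObjective ct cr cp S (greedyChain ct cr j₀) (1 - greedyChain ct cr j₀) 0 =
      chainValue ct cr S j₀ := by
  have hbefore : ∑ ℓ ∈ S.filter (· < j₀),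
      (ct ℓ * greedyChain ct cr j₀ ℓ + cr ℓ * (1 - greedyChain ct cr j₀ ℓ)) =
      ∑ ℓ ∈ S.filter (· < j₀), max (ct ℓ) (cr ℓ) := by
    refine sum_congr rfl fun ℓ hℓ => ?_
    have hlt := (mem_filter.mp hℓ).2
    by_cases hc : cr ℓ ≤ ct ℓ
    · simp [greedyChain, hlt, hc]
    · simp [greedyChain, hlt.ne, hc, le_of_not_ge hc]
  have hafter : ∑ ℓ ∈ S.filter (j₀ < ·),
      (ct ℓ * greedyChain ct cr j₀ ℓ + cr ℓ * (1 - greedyChain ct cr j₀ ℓ)) =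
      ∑ ℓ ∈ S.filter (j₀ < ·), cr ℓ := by
    refine sum_congr rfl fun ℓ hℓ => ?_
    have hlt := (mem_filter.mp hℓ).2
    simp [greedyChain, hlt.ne', not_lt_of_gt hlt]
  simp only [poolObjective, Pi.sub_apply, Pi.one_apply]
  rw [sum_eq_sum_filter_lt_add_add_sum_filter_gt_s16 hj₀, hbefore, hafter, chainValue]
  simp only [greedyChain, true_or, if_true, mul_one, sub_self, mul_zero, add_zero]
  ring

lemma exists_poolFeasible_objective_eq_poolOptimum (hS : S.Nonempty) :
    ∃ t r s p, PoolFeasible S t r s p ∧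
      poolObjective ct cr cp S t r p = poolOptimum ct cr cp S hS := by
  rcases max_choice (cp + ∑ j ∈ S, cr j) (S.sup' hS (chainValue ct cr S)) with h | h <;>
    rw [poolOptimum, h]
  · exact ⟨0, 1, 0, 1, poolFeasible_idle, poolObjective_idle ct cr cp⟩
  · obtain ⟨j₀, hj₀, hmax⟩ := exists_mem_eq_sup' hS (chainValue ct cr S)
    exact ⟨_, _, _, _, poolFeasible_greedyChain ct cr hj₀,
      (poolObjective_greedyChain ct cr cp hj₀).trans hmax.symm⟩

end SinglePool

/-- closed form for the maximization over the disjoint-pools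
mixed-integer set `H`: the value separates by pool and each block contributes the
single-pool closed form. -/
theorem disjoint_pools_closed_form
    (I J : ℕ) (P : Fin I → Finset (Fin J))
    (hdisj : ∀ i1 i2 : Fin I, i1 ≠ i2 → Disjoint (P i1) (P i2))
    (hne : ∀ i, (P i).Nonempty)
    (ct cr : Fin J → ℝ) (cp : Fin I → ℝ) :
    IsGreatest
      {v : ℝ | ∃ (t r : Fin J → ℝ) (s : Fin I → Fin J → ℝ) (p : Fin I → ℝ),
        (∀ i : Fin I, ∀ j ∈ P i, t j = 0 ∨ t j = 1) ∧
        (∀ i : Fin I, ∀ j ∈ P i, s i j = 0 ∨ s i j = 1) ∧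
        (∀ i : Fin I, (∑ j ∈ P i, s i j) ≤ 1) ∧
        (∀ i : Fin I, ∀ j ∈ P i, s i j ≤ t j) ∧
        (∀ i : Fin I, ∀ j ∈ P i, ∀ ℓ ∈ P i, ℓ < j → t j + s i ℓ ≤ 1) ∧
        (∀ i : Fin I, ∀ j ∈ P i, t j ≤ ∑ ℓ ∈ P i, s i ℓ) ∧
        (∀ i : Fin I, ∀ j ∈ P i, t j + r j = 1) ∧
        (∀ i : Fin I, p i + (∑ j ∈ P i, s i j) = 1) ∧
        v = (∑ j ∈ Finset.univ.biUnion P, (ct j * t j + cr j * r j)) +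
              ∑ i, cp i * p i}
      (∑ i, max (cp i + ∑ ℓ ∈ P i, cr ℓ)
        ((P i).sup' (hne i) (fun j =>
          ct j + (∑ ℓ ∈ (P i).filter (fun ℓ => ℓ < j), max (ct ℓ) (cr ℓ)) +
            ∑ ℓ ∈ (P i).filter (fun ℓ => j < ℓ), cr ℓ))) := by
  have hsplit (g : Fin J → ℝ) : ∑ j ∈ univ.biUnion P, g j = ∑ i, ∑ j ∈ P i, g j :=
    sum_biUnion fun i _ i' _ h => hdisj i i' h
  constructor
  · choose t r s p hfeas hval using
      fun i => exists_poolFeasible_objective_eq_poolOptimum ct cr (cp i) (hne i)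
    have hdisj_coe : Pairwise (Disjoint on fun i => (P i : Set (Fin J))) :=
      fun i i' h => disjoint_coe.mpr (hdisj i i' h)
    obtain ⟨t', ht'⟩ := exists_eqOn_of_pairwise_disjoint hdisj_coe t
    obtain ⟨r', hr'⟩ := exists_eqOn_of_pairwise_disjoint hdisj_coe r
    have hfeas' (i) : PoolFeasible (P i) t' r' (s i) (p i) := (hfeas i).congr (ht' i) (hr' i)
    refine ⟨t', r', s, p, fun i => (hfeas' i).t_binary, fun i => (hfeas' i).s_binary,
      fun i => (hfeas' i).sum_s_le_one, fun i => (hfeas' i).s_le_t,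
      fun i => (hfeas' i).t_add_s_le_one, fun i => (hfeas' i).t_le_sum_s,
      fun i => (hfeas' i).t_add_r, fun i => (hfeas' i).p_add_sum_s, ?_⟩
    rw [hsplit, ← sum_add_distrib]
    refine sum_congr rfl fun i _ => ?_
    exact (hval i).symm.trans (poolObjective_congr ct cr (cp i) (ht' i) (hr' i)).symm
  · rintro v ⟨t, r, s, p, h₁, h₂, h₃, h₄, h₅, h₆, h₇, h₈, rfl⟩
    rw [hsplit, ← sum_add_distrib]
    exact sum_le_sum fun i _ => PoolFeasible.objective_le_poolOptimum ct cr (cp i)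
      ⟨h₁ i, h₂ i, h₃ i, h₄ i, h₅ i, h₆ i, h₇ i, h₈ i⟩ (hne i)
end
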